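/- arXiv:1304.5219 — 7 statements merged into one kernel-verified Lean document; each statement's English description precedes it below -/
import Mathlib

section
/- Let X be a compact ultrametric space and p ∈ (1,∞). Then W_p(X) is connected by (1/p)-Hölder arcs: for all Borel probability measures μ, ν on X there exists γ : [0,1] → P(X) with γ(0) = μ, γ(1) = ν, and W_p(γ(s), γ(t)) ≤ W_p(μ,ν)·|s − t|^{1/p} for all s, t ∈ [0,1]. -/
open MeasureTheory
open scoped ENNReal NNReal

/-- A coupling of `μ` and `ν`. -/
def IsCoupling {X : Type*} [MeasurableSpace X] (π : Measure (X × X)) (μ ν : Measure X) : Prop :=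
  IsProbabilityMeasure π ∧ π.map Prod.fst = μ ∧ π.map Prod.snd = ν

/-- The `L^p` Wasserstein distance between two (probability) measures. -/
noncomputable def Wp {X : Type*} [MetricSpace X] [MeasurableSpace X] (p : ℝ)
    (μ ν : Measure X) : ℝ :=
  sInf {c : ℝ | ∃ π : Measure (X × X), IsCoupling π μ ν ∧
      c = ∫ ab, dist ab.1 ab.2 ^ p ∂π} ^ (1 / p)

section Aux

variable {X : Type*} [MetricSpace X] [CompactSpace X] [MeasurableSpace X] [BorelSpace X]

/-- The set of transport costs between `μ` and `ν`. -/
def costSet (p : ℝ) (μ ν : Measure X) : Set ℝ :=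
  {c : ℝ | ∃ π : Measure (X × X), IsCoupling π μ ν ∧
      c = ∫ ab, dist ab.1 ab.2 ^ p ∂π}

lemma Wp_eq_costSet (p : ℝ) (μ ν : Measure X) :
    Wp p μ ν = sInf (costSet p μ ν) ^ (1 / p) := rfl

lemma cont_cost {p : ℝ} (hp : 0 < p) :
    Continuous (fun ab : X × X => dist ab.1 ab.2 ^ p) :=
  Continuous.rpow_const continuous_dist (fun _ => Or.inr hp.le)

lemma integrable_cost {p : ℝ} (hp : 0 < p) (π : Measure (X × X)) [IsFiniteMeasure π] :
    Integrable (fun ab : X × X => dist ab.1 ab.2 ^ p) π :=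
  integrableOn_univ.mp ((cont_cost hp).continuousOn.integrableOn_compact isCompact_univ)

lemma costSet_nonneg {p : ℝ} {μ ν : Measure X} {c : ℝ} (hc : c ∈ costSet p μ ν) : 0 ≤ c := by
  obtain ⟨π, _, rfl⟩ := hc
  exact integral_nonneg fun ab => Real.rpow_nonneg dist_nonneg p

lemma costSet_bddBelow (p : ℝ) (μ ν : Measure X) : BddBelow (costSet p μ ν) :=
  ⟨0, fun _ hc => costSet_nonneg hc⟩

lemma costSet_nonempty (p : ℝ) (μ ν : Measure X)
    [IsProbabilityMeasure μ] [IsProbabilityMeasure ν] : (costSet p μ ν).Nonempty := by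
  refine ⟨_, μ.prod ν, ⟨inferInstance, ?_, ?_⟩, rfl⟩
  · simp [Measure.map_fst_prod]
  · simp [Measure.map_snd_prod]

lemma sInf_costSet_nonneg (p : ℝ) (μ ν : Measure X) : 0 ≤ sInf (costSet p μ ν) :=
  Real.sInf_nonneg fun _ hc => costSet_nonneg hc

lemma costSet_symm {p : ℝ} (hp : 0 < p) {μ ν : Measure X} {c : ℝ}
    (hc : c ∈ costSet p μ ν) : c ∈ costSet p ν μ := by
  obtain ⟨π, ⟨hπ, hf, hs⟩, rfl⟩ := hc
  haveI := hπ
  refine ⟨π.map Prod.swap, ⟨Measure.isProbabilityMeasure_map measurable_swap.aemeasurable, ?_, ?_⟩, ?_⟩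
  · rw [Measure.map_map measurable_fst measurable_swap]
    exact hs
  · rw [Measure.map_map measurable_snd measurable_swap]
    exact hf
  · rw [integral_map measurable_swap.aemeasurable (cont_cost hp).aestronglyMeasurable]
    simp [dist_comm]

lemma Wp_symm {p : ℝ} (hp : 0 < p) (μ ν : Measure X) : Wp p μ ν = Wp p ν μ := by
  rw [Wp_eq_costSet, Wp_eq_costSet]
  congr 1
  congr 1
  ext c
  exact ⟨fun h => costSet_symm hp h, fun h => costSet_symm hp h⟩

/-- The mixture `(1-r) μ + r ν`. -/
noncomputable def mix (r : ℝ) (μ ν : Measure X) : Measure X :=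
  ENNReal.ofReal (1 - r) • μ + ENNReal.ofReal r • ν

lemma mix_isProbability (r : ℝ) (hr0 : 0 ≤ r) (hr1 : r ≤ 1) (μ ν : Measure X)
    [IsProbabilityMeasure μ] [IsProbabilityMeasure ν] :
    IsProbabilityMeasure (mix r μ ν) := by
  constructor
  simp only [mix, Measure.add_apply, Measure.smul_apply, smul_eq_mul, measure_univ, mul_one]
  rw [← ENNReal.ofReal_add (by linarith) hr0]
  norm_num

lemma mix_zero (μ ν : Measure X) : mix 0 μ ν = μ := by
  simp [mix]

lemma mix_one (μ ν : Measure X) : mix 1 μ ν = ν := by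
  simp [mix]

lemma mix_mem_costSet {p : ℝ} (hp : 0 < p) {μ ν : Measure X}
    [IsProbabilityMeasure μ] [IsProbabilityMeasure ν]
    {s t : ℝ} (hs : 0 ≤ s) (hst : s ≤ t) (ht : t ≤ 1) {c : ℝ} (hc : c ∈ costSet p μ ν) :
    (t - s) * c ∈ costSet p (mix s μ ν) (mix t μ ν) := by
  obtain ⟨π, ⟨hπ, hfst, hsnd⟩, rfl⟩ := hc
  haveI := hπ
  set κ : Measure X := ENNReal.ofReal (1 - t) • μ + ENNReal.ofReal s • ν with hκ
  have hdiag : Measurable (fun x : X => (x, x)) := measurable_id.prodMk measurable_id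
  set π' : Measure (X × X) := κ.map (fun x => (x, x)) + ENNReal.ofReal (t - s) • π with hπ'
  have hκuniv : κ Set.univ = ENNReal.ofReal (1 - t) + ENNReal.ofReal s := by
    simp [hκ]
  have hπ'prob : IsProbabilityMeasure π' := by
    constructor
    rw [hπ', Measure.add_apply, Measure.map_apply hdiag MeasurableSet.univ]
    simp only [Set.preimage_univ, Measure.smul_apply, smul_eq_mul, measure_univ, mul_one]
    rw [hκuniv, ← ENNReal.ofReal_add (by linarith) hs,
      ← ENNReal.ofReal_add (by linarith) (by linarith)]
    norm_num
  have hmapdiag : ∀ f : X × X → X, Measurable f → (∀ x : X, f (x, x) = x) →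
      (κ.map (fun x => (x, x))).map f = κ := by
    intro f hfm hfx
    rw [Measure.map_map hfm hdiag]
    have : (f ∘ fun x : X => (x, x)) = id := funext fun x => hfx x
    rw [this, Measure.map_id]
  refine ⟨π', ⟨hπ'prob, ?_, ?_⟩, ?_⟩
  · rw [hπ', Measure.map_add _ _ measurable_fst, Measure.map_smul,
      hmapdiag Prod.fst measurable_fst (fun _ => rfl), hfst, hκ]
    rw [add_assoc, add_comm (ENNReal.ofReal s • ν), ← add_assoc, ← add_smul,
      ← ENNReal.ofReal_add (by linarith) (by linarith)]
    have : 1 - t + (t - s) = 1 - s := by ring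
    rw [this]
    rfl
  · rw [hπ', Measure.map_add _ _ measurable_snd, Measure.map_smul,
      hmapdiag Prod.snd measurable_snd (fun _ => rfl), hsnd, hκ]
    rw [add_assoc, ← add_smul, ← ENNReal.ofReal_add hs (by linarith)]
    have : s + (t - s) = t := by ring
    rw [this]
    rfl
  · haveI := hπ'prob
    have hint := integrable_cost (X := X) hp π'
    rw [hπ', integrable_add_measure] at hint
    rw [hπ', integral_add_measure hint.1 hint.2, integral_smul_measure,
      integral_map hdiag.aemeasurable (cont_cost hp).aestronglyMeasurable]
    simp [Real.zero_rpow hp.ne', ENNReal.toReal_ofReal (by linarith : (0:ℝ) ≤ t - s)]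

lemma Wp_mix_le {p : ℝ} (hp : 0 < p) (μ ν : Measure X)
    [IsProbabilityMeasure μ] [IsProbabilityMeasure ν]
    {s t : ℝ} (hs : 0 ≤ s) (hst : s ≤ t) (ht : t ≤ 1) :
    Wp p (mix s μ ν) (mix t μ ν) ≤ Wp p μ ν * (t - s) ^ (1 / p) := by
  set A := sInf (costSet p μ ν) with hA
  set B := sInf (costSet p (mix s μ ν) (mix t μ ν)) with hB
  have hAnn : 0 ≤ A := sInf_costSet_nonneg p μ ν
  have hBnn : 0 ≤ B := sInf_costSet_nonneg p _ _
  have h1 : ∀ c ∈ costSet p μ ν, B ≤ (t - s) * c := fun c hc =>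
    csInf_le (costSet_bddBelow _ _ _) (mix_mem_costSet hp hs hst ht hc)
  have h2 : B ≤ (t - s) * A := by
    rcases eq_or_lt_of_le hst with rfl | hlt
    · obtain ⟨c, hc⟩ := costSet_nonempty p μ ν
      have := h1 c hc
      simpa using this
    · have hpos : 0 < t - s := by linarith
      have : B / (t - s) ≤ A := le_csInf (costSet_nonempty p μ ν) fun c hc => by
        rw [div_le_iff₀ hpos]
        linarith [h1 c hc, mul_comm c (t - s)]
      calc B = (t - s) * (B / (t - s)) := by field_simp
        _ ≤ (t - s) * A := by nlinarith
  rw [Wp_eq_costSet, Wp_eq_costSet, ← hA, ← hB]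
  calc B ^ (1 / p) ≤ ((t - s) * A) ^ (1 / p) :=
        Real.rpow_le_rpow hBnn h2 (by positivity)
    _ = (t - s) ^ (1 / p) * A ^ (1 / p) := Real.mul_rpow (by linarith) hAnn
    _ = A ^ (1 / p) * (t - s) ^ (1 / p) := mul_comm _ _

end Aux

/-- For a compact ultrametric space `X` and `p > 1`, the Wasserstein space `W_p(X)` is
connected by `1/p`-Hölder arcs. -/
theorem wasserstein_ultrametric_holder_connected
    {X : Type*} [MetricSpace X] [CompactSpace X] [MeasurableSpace X] [BorelSpace X]
    (hX : ∀ x y z : X, dist x z ≤ max (dist x y) (dist y z))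
    (p : ℝ) (hp : 1 < p) :
    ∀ μ ν : ProbabilityMeasure X, ∃ γ : unitInterval → ProbabilityMeasure X,
      γ 0 = μ ∧ γ 1 = ν ∧ ∀ s t : unitInterval,
        Wp p ((γ s) : Measure X) ((γ t) : Measure X)
          ≤ Wp p (μ : Measure X) (ν : Measure X) * |(s : ℝ) - (t : ℝ)| ^ (1 / p) := by
  intro μ ν
  have hp0 : 0 < p := by linarith
  refine ⟨fun t => ⟨mix (t : ℝ) (μ : Measure X) (ν : Measure X),
    mix_isProbability _ t.2.1 t.2.2 _ _⟩, ?_, ?_, ?_⟩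
  · exact Subtype.ext (by simpa using mix_zero (μ : Measure X) (ν : Measure X))
  · exact Subtype.ext (by simpa using mix_one (μ : Measure X) (ν : Measure X))
  · intro s t
    rcases le_total (s : ℝ) (t : ℝ) with hst | hst
    · have := Wp_mix_le hp0 (μ : Measure X) (ν : Measure X) s.2.1 hst t.2.2
      have habs : |(s : ℝ) - (t : ℝ)| = t - s := by
        rw [abs_sub_comm, abs_of_nonneg (by linarith)]
      simpa [habs] using this
    · have := Wp_mix_le hp0 (μ : Measure X) (ν : Measure X) t.2.1 hst s.2.2
      have habs : |(s : ℝ) - (t : ℝ)| = s - t := abs_of_nonneg (by linarith)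
      rw [Wp_symm hp0]
      simpa [habs] using this
end

section
/- Let X be a compact ultrametric space, p ∈ (1,∞), and α ∈ (1/p, 1]. Then every α-Hölder arc in W_p(X) is constant: if γ : [0,1] → P(X) satisfies W_p(γ(s), γ(t)) ≤ K·|s − t|^α for some constant K ≥ 0 and all s, t ∈ [0,1], then γ(s) = γ(t) for all s, t ∈ [0,1]. -/
open MeasureTheory Metric Filter Topology

/-!
In an ultrametric space every open ball `B` of radius `r` is `r`-separated from its complement,
so any coupling of `μ` and `ν` moves mass at least `μ B - ν B` over distance at least `r`:
`r ^ p * (μ B - ν B) ≤ W_p(μ, ν) ^ p`. Along an `α`-Hölder arc `γ` in `W_p`, the function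
`t ↦ γ t B` is therefore `α p`-Hölder with `α p > 1`, hence constant. The balls of positive radius
form a π-system generating the Borel σ-algebra, so all the `γ t` coincide.
-/

section HolderConstant

variable {E Y : Type*} [SeminormedAddCommGroup E] [NormedSpace ℝ E] [MetricSpace Y]
  {s : Set E} {f : E → Y} {C β : ℝ} {a b : E}

/-- Chain `a` to `b` through `n` equally spaced points of the segment. -/
theorem Convex.dist_le_mul_norm_sub_rpow_mul_rpow (hs : Convex ℝ s)
    (hf : ∀ x ∈ s, ∀ y ∈ s, dist (f x) (f y) ≤ C * ‖x - y‖ ^ β) (ha : a ∈ s) (hb : b ∈ s)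
    {n : ℕ} (hn : n ≠ 0) :
    dist (f a) (f b) ≤ C * ‖a - b‖ ^ β * (n : ℝ) ^ (1 - β) := by
  have hn₀ : (0 : ℝ) < n := by positivity
  set x : ℕ → E := fun k => a + ((k : ℝ) / n) • (b - a)
  have hx_mem : ∀ k ≤ n, x k ∈ s := fun k hk =>
    hs.add_smul_sub_mem ha hb ⟨by positivity, div_le_one_of_le₀ (by exact_mod_cast hk) hn₀.le⟩
  have hx_step : ∀ k, ‖x k - x (k + 1)‖ = ‖a - b‖ / n := fun k => by
    have : x k - x (k + 1) = (1 / (n : ℝ)) • (a - b) := by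
      simp only [x, Nat.cast_succ]
      rw [← sub_eq_zero]
      module
    rw [this, norm_smul, Real.norm_of_nonneg (by positivity), one_div_mul_eq_div]
  calc dist (f a) (f b) = dist (f (x 0)) (f (x n)) := by simp [x, hn₀.ne']
    _ ≤ ∑ k ∈ Finset.range n, dist (f (x k)) (f (x (k + 1))) :=
        dist_le_range_sum_dist (f ∘ x) n
    _ ≤ ∑ _k ∈ Finset.range n, C * (‖a - b‖ / n) ^ β := Finset.sum_le_sum fun k hk => by
        have hk := Finset.mem_range.mp hk
        rw [← hx_step k]
        exact hf _ (hx_mem k hk.le) _ (hx_mem (k + 1) hk)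
    _ = C * ‖a - b‖ ^ β * (n : ℝ) ^ (1 - β) := by
        rw [Finset.sum_const, Finset.card_range, nsmul_eq_mul,
          Real.div_rpow (norm_nonneg _) hn₀.le, Real.rpow_sub hn₀, Real.rpow_one]
        field_simp

theorem Convex.eq_of_dist_le_mul_norm_sub_rpow (hs : Convex ℝ s) (hβ : 1 < β)
    (hf : ∀ x ∈ s, ∀ y ∈ s, dist (f x) (f y) ≤ C * ‖x - y‖ ^ β) (ha : a ∈ s) (hb : b ∈ s) :
    f a = f b := by
  have hlim : Tendsto (fun n : ℕ => C * ‖a - b‖ ^ β * (n : ℝ) ^ (1 - β)) atTop (𝓝 0) := by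
    have := (tendsto_rpow_neg_atTop (by linarith : 0 < β - 1)).comp tendsto_natCast_atTop_atTop
    simpa [neg_sub] using this.const_mul (C * ‖a - b‖ ^ β)
  refine dist_le_zero.mp (ge_of_tendsto hlim ?_)
  filter_upwards [eventually_ne_atTop 0] with n hn
  exact hs.dist_le_mul_norm_sub_rpow_mul_rpow hf ha hb hn

theorem unitInterval.eq_of_dist_le_mul_abs_sub_rpow {g : unitInterval → Y} (hβ : 1 < β)
    (hg : ∀ s t : unitInterval, dist (g s) (g t) ≤ C * |(s : ℝ) - t| ^ β) (s t : unitInterval) :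
    g s = g t := by
  have := (convex_Icc (0 : ℝ) 1).eq_of_dist_le_mul_norm_sub_rpow
    (f := fun x => g (Set.projIcc 0 1 zero_le_one x)) (C := C) hβ ?_ s.2 t.2
  · simpa using this
  · intro x hx y hy
    simpa [Set.projIcc_of_mem _ hx, Set.projIcc_of_mem _ hy] using hg ⟨x, hx⟩ ⟨y, hy⟩

end HolderConstant

section Coupling

variable {X : Type*} [MeasurableSpace X] {π : Measure (X × X)} {μ ν : Measure X} {A : Set X}

theorem isCoupling_prod (μ ν : Measure X) [IsProbabilityMeasure μ] [IsProbabilityMeasure ν] :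
    IsCoupling (μ.prod ν) μ ν :=
  ⟨inferInstance, by simp, by simp⟩

theorem IsCoupling.measureReal_sub_measureReal_le (hπ : IsCoupling π μ ν)
    (hA : MeasurableSet A) : μ.real A - ν.real A ≤ π.real (A ×ˢ Aᶜ) := by
  obtain ⟨_, rfl, rfl⟩ := hπ
  rw [map_measureReal_apply measurable_fst hA, map_measureReal_apply measurable_snd hA,
    sub_le_iff_le_add']
  calc π.real (Prod.fst ⁻¹' A) ≤ π.real (Prod.snd ⁻¹' A ∪ A ×ˢ Aᶜ) :=
        measureReal_mono fun ab hab => by by_cases h : ab.2 ∈ A <;> simp_all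
    _ ≤ _ := measureReal_union_le _ _

variable [PseudoMetricSpace X] {r p : ℝ}

/-- Markov's inequality for the cost `dist ^ p` on the pairs that leave `A`. -/
theorem IsCoupling.rpow_mul_sub_le_integral (hπ : IsCoupling π μ ν) (hA : MeasurableSet A)
    (hr : 0 ≤ r) (hp : 0 ≤ p) (hsep : ∀ a ∈ A, ∀ b ∉ A, r ≤ dist a b)
    (hint : Integrable (fun ab : X × X => dist ab.1 ab.2 ^ p) π) :
    r ^ p * (μ.real A - ν.real A) ≤ ∫ ab, dist ab.1 ab.2 ^ p ∂π := by
  have := hπ.1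
  have hleave : A ×ˢ Aᶜ ⊆ {ab : X × X | r ^ p ≤ dist ab.1 ab.2 ^ p} := fun ab hab =>
    Real.rpow_le_rpow hr (hsep _ hab.1 _ hab.2) hp
  calc r ^ p * (μ.real A - ν.real A) ≤ r ^ p * π.real (A ×ˢ Aᶜ) := by
        gcongr; exact hπ.measureReal_sub_measureReal_le hA
    _ ≤ r ^ p * π.real {ab : X × X | r ^ p ≤ dist ab.1 ab.2 ^ p} :=
        mul_le_mul_of_nonneg_left (measureReal_mono hleave) (by positivity)
    _ ≤ ∫ ab, dist ab.1 ab.2 ^ p ∂π :=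
        mul_meas_ge_le_integral_of_nonneg (ae_of_all _ fun _ => by positivity) hint _

end Coupling

section OptimalCost

variable {X : Type*} [MetricSpace X] [MeasurableSpace X] {p : ℝ} {μ ν : Measure X}

noncomputable def optimalCost (p : ℝ) (μ ν : Measure X) : ℝ :=
  sInf {c : ℝ | ∃ π : Measure (X × X), IsCoupling π μ ν ∧
      c = ∫ ab, dist ab.1 ab.2 ^ p ∂π}

theorem optimalCost_nonneg : 0 ≤ optimalCost p μ ν :=
  Real.sInf_nonneg <| by
    rintro _ ⟨π, -, rfl⟩
    exact integral_nonneg fun _ => by positivity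

theorem Wp_eq_optimalCost_rpow : Wp p μ ν = optimalCost p μ ν ^ (1 / p) := rfl

theorem Wp_nonneg : 0 ≤ Wp p μ ν :=
  Real.rpow_nonneg optimalCost_nonneg _

theorem Wp_rpow (hp : p ≠ 0) : Wp p μ ν ^ p = optimalCost p μ ν := by
  rw [Wp_eq_optimalCost_rpow, ← Real.rpow_mul optimalCost_nonneg, one_div_mul_cancel hp,
    Real.rpow_one]

theorem rpow_mul_sub_le_optimalCost [CompactSpace X] [OpensMeasurableSpace X]
    [IsProbabilityMeasure μ] [IsProbabilityMeasure ν] {A : Set X} (hA : MeasurableSet A)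
    {r : ℝ} (hr : 0 ≤ r) (hp : 0 ≤ p) (hsep : ∀ a ∈ A, ∀ b ∉ A, r ≤ dist a b) :
    r ^ p * (μ.real A - ν.real A) ≤ optimalCost p μ ν := by
  refine le_csInf ⟨_, μ.prod ν, isCoupling_prod μ ν, rfl⟩ ?_
  rintro _ ⟨π, hπ, rfl⟩
  have := hπ.1
  have hcont : Continuous fun ab : X × X => dist ab.1 ab.2 ^ p :=
    continuous_dist.rpow_const fun _ => Or.inr hp
  exact hπ.rpow_mul_sub_le_integral hA hr hp hsep
    (hcont.integrable_of_hasCompactSupport (HasCompactSupport.of_compactSpace _))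

end OptimalCost

theorem Metric.isTopologicalBasis_ball_pos {X : Type*} [PseudoMetricSpace X] :
    TopologicalSpace.IsTopologicalBasis {B : Set X | ∃ x, ∃ r > 0, B = ball x r} := by
  refine TopologicalSpace.isTopologicalBasis_of_isOpen_of_nhds ?_ fun a U haU hU => ?_
  · rintro _ ⟨x, r, -, rfl⟩
    exact isOpen_ball
  · obtain ⟨ε, hε, hεU⟩ := Metric.isOpen_iff.mp hU a haU
    exact ⟨ball a ε, ⟨a, ε, hε, rfl⟩, mem_ball_self hε, hεU⟩

namespace IsUltrametricDist

variable {X : Type*} [PseudoMetricSpace X] [IsUltrametricDist X]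

theorem le_dist_of_mem_ball_of_notMem_ball {x a b : X} {r : ℝ} (ha : a ∈ ball x r)
    (hb : b ∉ ball x r) : r ≤ dist a b := by
  by_contra! hab
  rw [ball_eq_of_mem ha] at hb
  exact hb (mem_ball'.mpr hab)

theorem isPiSystem_ball : IsPiSystem {B : Set X | ∃ x, ∃ r > 0, B = ball x r} := by
  rintro _ ⟨x, r, hr, rfl⟩ _ ⟨y, s, hs, rfl⟩ hne
  rcases ball_subset_trichotomy (x := x) (y := y) (r := r) (s := s) with h | h | h
  · exact ⟨x, r, hr, Set.inter_eq_left.mpr h⟩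
  · exact ⟨y, s, hs, Set.inter_eq_right.mpr h⟩
  · exact absurd h.inter_eq hne.ne_empty

theorem ext_of_ball [SecondCountableTopology X] [MeasurableSpace X] [BorelSpace X]
    {μ ν : Measure X} [IsFiniteMeasure μ] (hball : ∀ x, ∀ r > 0, μ (ball x r) = ν (ball x r))
    (huniv : μ Set.univ = ν Set.univ) : μ = ν := by
  refine ext_of_generate_finite _
    (BorelSpace.measurable_eq.trans isTopologicalBasis_ball_pos.borel_eq_generateFrom)
    isPiSystem_ball ?_ huniv
  rintro _ ⟨x, r, hr, rfl⟩
  exact hball x r hr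

end IsUltrametricDist

section Ultrametric

variable {X : Type*} [MetricSpace X] [IsUltrametricDist X] [CompactSpace X] [MeasurableSpace X]
  [OpensMeasurableSpace X] {p : ℝ}

theorem rpow_mul_sub_measureReal_ball_le_Wp_rpow (μ ν : Measure X) [IsProbabilityMeasure μ]
    [IsProbabilityMeasure ν] (x : X) {r : ℝ} (hr : 0 ≤ r) (hp : 0 < p) :
    r ^ p * (μ.real (ball x r) - ν.real (ball x r)) ≤ Wp p μ ν ^ p := by
  rw [Wp_rpow hp.ne']
  exact rpow_mul_sub_le_optimalCost measurableSet_ball hr hp.le fun a ha b hb =>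
    IsUltrametricDist.le_dist_of_mem_ball_of_notMem_ball ha hb

theorem measureReal_ball_eq_of_Wp_le_mul_abs_sub_rpow {γ : unitInterval → ProbabilityMeasure X}
    {α K : ℝ} (hp : 0 < p) (hαp : 1 < α * p) (hK : 0 ≤ K)
    (hγ : ∀ s t : unitInterval, Wp p (γ s : Measure X) (γ t) ≤ K * |(s : ℝ) - t| ^ α)
    (x : X) {r : ℝ} (hr : 0 < r) (s t : unitInterval) :
    (γ s : Measure X).real (ball x r) = (γ t : Measure X).real (ball x r) := by
  have hWp (u v : unitInterval) :
      Wp p (γ u : Measure X) (γ v) ^ p ≤ K ^ p * |(u : ℝ) - v| ^ (α * p) :=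
    calc _ ≤ (K * |(u : ℝ) - v| ^ α) ^ p :=
          Real.rpow_le_rpow (Wp_nonneg (X := X)) (hγ u v) hp.le
      _ = _ := by rw [Real.mul_rpow hK (by positivity), ← Real.rpow_mul (abs_nonneg _)]
  have hmass (u v : unitInterval) := rpow_mul_sub_measureReal_ball_le_Wp_rpow
    (γ u : Measure X) (γ v) x hr.le hp
  refine unitInterval.eq_of_dist_le_mul_abs_sub_rpow
    (g := fun u => (γ u : Measure X).real (ball x r)) (C := K ^ p / r ^ p) hαp (fun u v => ?_) s t
  have hrp : 0 < r ^ p := by positivity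
  rw [Real.dist_eq, abs_sub_le_iff, div_mul_eq_mul_div, le_div_iff₀' hrp, le_div_iff₀' hrp]
  exact ⟨(hmass u v).trans (hWp u v), (hmass v u).trans (abs_sub_comm (u : ℝ) v ▸ hWp v u)⟩

end Ultrametric

theorem wasserstein_ultrametric_holder_arc_constant_general
    {X : Type*} [MetricSpace X] [CompactSpace X] [MeasurableSpace X] [BorelSpace X]
    (hX : ∀ x y z : X, dist x z ≤ max (dist x y) (dist y z))
    (p : ℝ) (hp : 1 < p) (α : ℝ) (hα₁ : 1 / p < α)
    (γ : unitInterval → ProbabilityMeasure X) (K : ℝ) (hK : 0 ≤ K)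
    (hγ : ∀ s t : unitInterval,
      Wp p ((γ s) : Measure X) ((γ t) : Measure X) ≤ K * |(s : ℝ) - (t : ℝ)| ^ α) :
    ∀ s t : unitInterval, γ s = γ t := by
  have : IsUltrametricDist X := ⟨hX⟩
  have hp₀ : 0 < p := by linarith
  have hαp : 1 < α * p := by rwa [div_lt_iff₀ hp₀] at hα₁
  intro s t
  refine ProbabilityMeasure.toMeasure_injective <| IsUltrametricDist.ext_of_ball
    (fun x r hr => ?_) (by simp)
  exact (measureReal_eq_measureReal_iff).mp
    (measureReal_ball_eq_of_Wp_le_mul_abs_sub_rpow hp₀ hαp hK hγ x hr s t)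

/-- For a compact ultrametric space `X`, `p > 1` and `α ∈ (1/p, 1]`, every `α`-Hölder arc
in `W_p(X)` is constant. -/
theorem wasserstein_ultrametric_holder_arc_constant
    {X : Type*} [MetricSpace X] [CompactSpace X] [MeasurableSpace X] [BorelSpace X]
    (hX : ∀ x y z : X, dist x z ≤ max (dist x y) (dist y z))
    (p : ℝ) (hp : 1 < p) (α : ℝ) (hα₁ : 1 / p < α) (hα₂ : α ≤ 1)
    (γ : unitInterval → ProbabilityMeasure X) (K : ℝ) (hK : 0 ≤ K)
    (hγ : ∀ s t : unitInterval,
      Wp p ((γ s) : Measure X) ((γ t) : Measure X) ≤ K * |(s : ℝ) - (t : ℝ)| ^ α) :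
    ∀ s t : unitInterval, γ s = γ t :=
  wasserstein_ultrametric_holder_arc_constant_general hX p hp α hα₁ γ K hK hγ
end

section
/- Let X be a compact ultrametric space, p ∈ [1,∞), and μ, ν Borel probability measures on X. Let Π be an optimal coupling of (μ,ν) for the cost d^p, i.e. a coupling achieving ∫_{X×X} d(a,b)^p dΠ(a,b) = W_p(μ,ν)^p. Then for every closed ball B of X one has Π(B × (X∖B)) = max(μ(B) − ν(B), 0). -/
open MeasureTheory
open scoped ENNReal NNReal

/-!
If an optimal plan `π` charged both `B ×ˢ Bᶜ` and `Bᶜ ×ˢ B` for a closed ball `B = closedBall x r`,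
exchanging targets would make it cheaper: for `(a, b) ∈ B ×ˢ Bᶜ` and `(a', b') ∈ Bᶜ ×ˢ B` the
ultrametric inequality gives `d(a, b) = d(x, b)`, `d(a', b') = d(x, a')`,
`d(a, b') ≤ r < min (d(x, a')) (d(x, b))` and `d(a', b) ≤ max (d(x, a')) (d(x, b))`, so
`d(a, b')ᵖ + d(a', b)ᵖ < d(a, b)ᵖ + d(a', b')ᵖ`. The exchange is performed on the product of the
restrictions of `π` to the two sets, which preserves the marginals. Hence one of the two fluxes
vanishes, and `μ B = π (B ×ˢ B) + π (B ×ˢ Bᶜ)`, `ν B = π (B ×ˢ B) + π (Bᶜ ×ˢ B)` give the formula.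
-/

open Set Metric

section OptimalPlan

variable {X Y : Type*} [MeasurableSpace X] [MeasurableSpace Y]

def IsOptimalPlan (c : X × Y → ℝ) (π : Measure (X × Y)) : Prop :=
  ∀ π' : Measure (X × Y), π'.map Prod.fst = π.map Prod.fst → π'.map Prod.snd = π.map Prod.snd →
    ∫ z, c z ∂π ≤ ∫ z, c z ∂π'

lemma integral_lt_integral_of_ae_lt {α : Type*} [MeasurableSpace α] {μ : Measure α} [NeZero μ]
    {f g : α → ℝ} (hf : Integrable f μ) (hg : Integrable g μ) (hfg : ∀ᵐ x ∂μ, f x < g x) :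
    ∫ x, f x ∂μ < ∫ x, g x ∂μ := by
  have hgf_pos : ∀ᵐ x ∂μ, 0 < (g - f) x := hfg.mono fun x hx => sub_pos.2 hx
  have hgf_nonneg : 0 ≤ᵐ[μ] g - f := hgf_pos.mono fun x hx => hx.le
  rw [← sub_pos, ← integral_sub hg hf]
  refine (integral_nonneg_of_ae hgf_nonneg).lt_of_ne fun h => ?_
  have hgf_zero := (integral_eq_zero_iff_of_nonneg_ae hgf_nonneg (hg.sub hf)).1 h.symm
  have : ∀ᵐ _ ∂μ, False := by
    filter_upwards [hgf_pos, hgf_zero] with x hpos hzero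
    exact hpos.ne' hzero
  exact NeZero.ne μ (ae_eq_bot.1 (Filter.eventually_false_iff_eq_bot.1 this))

lemma integral_map_add_map {α β : Type*} [MeasurableSpace α] [MeasurableSpace β] {μ : Measure α}
    [IsFiniteMeasure μ] {f g : α → β} (hf : Measurable f) (hg : Measurable g) {c : β → ℝ}
    {C : ℝ} (hc : Measurable c) (hcC : ∀ z, ‖c z‖ ≤ C) :
    ∫ z, c z ∂(μ.map f + μ.map g) = ∫ x, c (f x) + c (g x) ∂μ := by
  have hint : ∀ (σ : Measure β) [IsFiniteMeasure σ], Integrable c σ := fun σ _ =>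
    Integrable.of_bound hc.aestronglyMeasurable C (ae_of_all _ hcC)
  rw [integral_add_measure (hint _) (hint _),
    integral_map hf.aemeasurable hc.aestronglyMeasurable,
    integral_map hg.aemeasurable hc.aestronglyMeasurable]
  exact (integral_add ((hint _).comp_measurable hf) ((hint _).comp_measurable hg)).symm

noncomputable def exchangeMeasure (γ : Measure ((X × Y) × (X × Y))) : Measure (X × Y) :=
  γ.map (fun z => (z.1.1, z.2.2)) + γ.map (fun z => (z.2.1, z.1.2))

section Exchange

variable (γ : Measure ((X × Y) × (X × Y)))

instance [IsFiniteMeasure γ] : IsFiniteMeasure (exchangeMeasure γ) := by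
  unfold exchangeMeasure; infer_instance

lemma map_fst_exchangeMeasure :
    (exchangeMeasure γ).map Prod.fst = (γ.map Prod.fst + γ.map Prod.snd).map Prod.fst := by
  simp only [exchangeMeasure, Measure.map_add _ _ measurable_fst]
  rw [Measure.map_map measurable_fst (by fun_prop), Measure.map_map measurable_fst (by fun_prop),
    Measure.map_map measurable_fst measurable_fst, Measure.map_map measurable_fst measurable_snd]
  rfl

lemma map_snd_exchangeMeasure :
    (exchangeMeasure γ).map Prod.snd = (γ.map Prod.fst + γ.map Prod.snd).map Prod.snd := by
  simp only [exchangeMeasure, Measure.map_add _ _ measurable_snd]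
  rw [Measure.map_map measurable_snd (by fun_prop), Measure.map_map measurable_snd (by fun_prop),
    Measure.map_map measurable_snd measurable_fst, Measure.map_map measurable_snd measurable_snd]
  exact add_comm _ _

end Exchange

variable {c : X × Y → ℝ} {C : ℝ} {π : Measure (X × Y)}

/-- Replacing the two projections of `γ` inside `π` by `exchangeMeasure γ` keeps the marginals. -/
theorem IsOptimalPlan.not_ae_exchange_lt [IsFiniteMeasure π] (hπ : IsOptimalPlan c π)
    (hc : Measurable c) (hcC : ∀ z, ‖c z‖ ≤ C)
    (γ : Measure ((X × Y) × (X × Y))) [IsFiniteMeasure γ] [NeZero γ]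
    (hγ : γ.map Prod.fst + γ.map Prod.snd ≤ π) :
    ¬ ∀ᵐ z ∂γ, c (z.1.1, z.2.2) + c (z.2.1, z.1.2) < c z.1 + c z.2 := by
  intro hlt
  have hint : ∀ (σ : Measure (X × Y)) [IsFiniteMeasure σ], Integrable c σ := fun σ _ =>
    Integrable.of_bound hc.aestronglyMeasurable C (ae_of_all _ hcC)
  have hl : Measurable fun z : (X × Y) × (X × Y) => (z.1.1, z.2.2) := by fun_prop
  have hr : Measurable fun z : (X × Y) × (X × Y) => (z.2.1, z.1.2) := by fun_prop
  set δ := γ.map Prod.fst + γ.map Prod.snd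
  have hπδ : π - δ + δ = π := Measure.sub_add_cancel_of_le hγ
  have hcost : ∫ z, c z ∂δ ≤ ∫ z, c z ∂(exchangeMeasure γ) := by
    have hle := hπ (π - δ + exchangeMeasure γ)
      (by rw [Measure.map_add _ _ measurable_fst, map_fst_exchangeMeasure,
        ← Measure.map_add _ _ measurable_fst, hπδ])
      (by rw [Measure.map_add _ _ measurable_snd, map_snd_exchangeMeasure,
        ← Measure.map_add _ _ measurable_snd, hπδ])
    have hsplit : ∫ z, c z ∂π = ∫ z, c z ∂(π - δ) + ∫ z, c z ∂δ := by
      conv_lhs => rw [← hπδ]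
      exact integral_add_measure (hint _) (hint _)
    rw [hsplit, integral_add_measure (μ := π - δ) (hint _) (hint _)] at hle
    linarith
  have hgain : ∫ z, c z ∂(exchangeMeasure γ) < ∫ z, c z ∂δ := by
    rw [exchangeMeasure, integral_map_add_map hl hr hc hcC,
      integral_map_add_map measurable_fst measurable_snd hc hcC]
    exact integral_lt_integral_of_ae_lt (((hint _).comp_measurable hl).add
      ((hint _).comp_measurable hr)) (((hint _).comp_measurable measurable_fst).add
      ((hint _).comp_measurable measurable_snd)) hlt
  exact hgain.not_ge hcost

theorem IsOptimalPlan.measure_eq_zero_or_measure_eq_zero [IsProbabilityMeasure π]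
    (hπ : IsOptimalPlan c π) (hc : Measurable c) (hcC : ∀ z, ‖c z‖ ≤ C)
    {S T : Set (X × Y)} (hS : MeasurableSet S) (hT : MeasurableSet T)
    (hST : ∀ z ∈ S, ∀ w ∈ T, c (z.1, w.2) + c (w.1, z.2) < c z + c w) :
    π S = 0 ∨ π T = 0 := by
  by_contra! hpos
  have hdisj : Disjoint S T := disjoint_left.2 fun z hzS hzT => (hST z hzS z hzT).false
  have hγ : (π.restrict S).prod (π.restrict T) ≠ 0 := by
    rw [← Measure.measure_univ_ne_zero, ← univ_prod_univ, Measure.prod_prod,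
      Measure.restrict_apply_univ, Measure.restrict_apply_univ]
    exact mul_ne_zero hpos.1 hpos.2
  have : NeZero ((π.restrict S).prod (π.restrict T)) := ⟨hγ⟩
  have hshrink : ∀ (k : ℝ≥0∞) (ρ : Measure (X × Y)), k ≤ 1 → k • ρ ≤ ρ := fun k ρ hk A => by
    simpa only [Measure.smul_apply, smul_eq_mul] using mul_le_of_le_one_left zero_le hk
  refine hπ.not_ae_exchange_lt hc hcC ((π.restrict S).prod (π.restrict T)) ?_ ?_
  · rw [Measure.map_fst_prod, Measure.map_snd_prod, Measure.restrict_apply_univ,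
      Measure.restrict_apply_univ]
    calc π T • π.restrict S + π S • π.restrict T ≤ π.restrict S + π.restrict T :=
          add_le_add (hshrink _ _ prob_le_one) (hshrink _ _ prob_le_one)
      _ = π.restrict (S ∪ T) := (Measure.restrict_union hdisj hT).symm
      _ ≤ π := Measure.restrict_le_self
  · rw [Measure.prod_restrict]
    filter_upwards [ae_restrict_mem (hS.prod hT)] with z hz
    exact hST _ hz.1 _ hz.2

end OptimalPlan

section Ultrametric

variable {X : Type*} [PseudoMetricSpace X] [IsUltrametricDist X]

lemma IsUltrametricDist.dist_eq_dist_of_mem_closedBall_of_notMem {x a b : X} {r : ℝ}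
    (ha : a ∈ closedBall x r) (hb : b ∉ closedBall x r) : dist a b = dist x b := by
  have hab : dist x a < dist a b := by
    rw [IsUltrametricDist.closedBall_eq_of_mem ha, mem_closedBall, not_le] at hb
    rw [dist_comm x a, dist_comm a b]
    exact (mem_closedBall.1 ha).trans_lt hb
  rw [IsUltrametricDist.dist_eq_max_of_dist_ne_dist x a b hab.ne, max_eq_right hab.le]

theorem IsUltrametricDist.exchange_lt {φ : ℝ → ℝ} (hφ : StrictMonoOn φ (Ici 0))
    {x a b a' b' : X} {r : ℝ} (ha : a ∈ closedBall x r) (hb : b ∉ closedBall x r)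
    (ha' : a' ∉ closedBall x r) (hb' : b' ∈ closedBall x r) :
    φ (dist a b') + φ (dist a' b) < φ (dist a b) + φ (dist a' b') := by
  have hin : dist a b' ≤ r :=
    (dist_triangle_max a x b').trans (max_le ha (mem_closedBall'.1 hb'))
  have hb_far : r < dist x b := by rw [dist_comm]; simpa using hb
  have ha'_far : r < dist x a' := by rw [dist_comm]; simpa using ha'
  have hout : dist a' b ≤ dist x a' ∨ dist a' b ≤ dist x b :=
    le_max_iff.1 (dist_comm a' x ▸ dist_triangle_max a' x b)
  rw [dist_eq_dist_of_mem_closedBall_of_notMem ha hb, dist_comm a' b',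
    dist_eq_dist_of_mem_closedBall_of_notMem hb' ha']
  have hφin : φ (dist a b') < min (φ (dist x b)) (φ (dist x a')) :=
    lt_min (hφ dist_nonneg dist_nonneg (hin.trans_lt hb_far))
      (hφ dist_nonneg dist_nonneg (hin.trans_lt ha'_far))
  have hφout : φ (dist a' b) ≤ max (φ (dist x b)) (φ (dist x a')) := by
    rcases hout with h | h
    · exact le_max_of_le_right (hφ.monotoneOn dist_nonneg dist_nonneg h)
    · exact le_max_of_le_left (hφ.monotoneOn dist_nonneg dist_nonneg h)
  calc φ (dist a b') + φ (dist a' b)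
      < min (φ (dist x b)) (φ (dist x a')) + max (φ (dist x b)) (φ (dist x a')) :=
        add_lt_add_of_lt_of_le hφin hφout
    _ = φ (dist x b) + φ (dist x a') := min_add_max _ _

end Ultrametric

theorem MeasureTheory.Measure.map_fst_apply_eq_add {X Y : Type*} [MeasurableSpace X]
    [MeasurableSpace Y] (π : Measure (X × Y)) {A : Set X} (hA : MeasurableSet A) {B : Set Y}
    (hB : MeasurableSet B) : π.map Prod.fst A = π (A ×ˢ B) + π (A ×ˢ Bᶜ) := by
  rw [Measure.map_apply measurable_fst hA, ← measure_inter_add_sdiff _ (measurable_snd hB)]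
  rfl

theorem MeasureTheory.Measure.map_snd_apply_eq_add {X Y : Type*} [MeasurableSpace X]
    [MeasurableSpace Y] (π : Measure (X × Y)) {A : Set X} (hA : MeasurableSet A) {B : Set Y}
    (hB : MeasurableSet B) : π.map Prod.snd B = π (A ×ˢ B) + π (Aᶜ ×ˢ B) := by
  rw [Measure.map_apply measurable_snd hB, ← measure_inter_add_sdiff _ (measurable_fst hA),
    inter_comm, sdiff_eq_compl_inter]
  rfl

theorem isOptimalPlan_of_integral_eq_Wp_rpow {X : Type*} [MetricSpace X] [MeasurableSpace X]
    {p : ℝ} (hp : 0 < p) {μ ν : Measure X} {π : Measure (X × X)} (hπ : IsCoupling π μ ν)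
    (hopt : ∫ ab, dist ab.1 ab.2 ^ p ∂π = Wp p μ ν ^ p) :
    IsOptimalPlan (fun ab : X × X => dist ab.1 ab.2 ^ p) π := by
  obtain ⟨hprob, hfst, hsnd⟩ := hπ
  intro π' hfst' hsnd'
  have hcoupling : IsCoupling π' μ ν := by
    refine ⟨⟨?_⟩, hfst' ▸ hfst, hsnd' ▸ hsnd⟩
    simpa [Measure.map_apply measurable_fst MeasurableSet.univ] using
      congrArg (fun m : Measure X => m univ) hfst'
  have hcosts_nonneg : ∀ c ∈ {c : ℝ | ∃ σ : Measure (X × X), IsCoupling σ μ ν ∧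
      c = ∫ ab, dist ab.1 ab.2 ^ p ∂σ}, 0 ≤ c := by
    rintro _ ⟨σ, -, rfl⟩
    exact integral_nonneg fun _ => Real.rpow_nonneg dist_nonneg p
  rw [hopt, Wp, ← Real.rpow_mul (Real.sInf_nonneg hcosts_nonneg), one_div_mul_cancel hp.ne',
    Real.rpow_one]
  exact csInf_le ⟨0, hcosts_nonneg⟩ ⟨π', hcoupling, rfl⟩

theorem optimal_coupling_ball_flux_general
    {X : Type*} [MetricSpace X] [CompactSpace X] [MeasurableSpace X] [BorelSpace X]
    (hX : ∀ x y z : X, dist x z ≤ max (dist x y) (dist y z))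
    (p : ℝ) (hp : 1 ≤ p)
    (μ ν : Measure X)
    (π : Measure (X × X)) (hπ : IsCoupling π μ ν)
    (hopt : ∫ ab, dist ab.1 ab.2 ^ p ∂π = Wp p μ ν ^ p) :
    ∀ (x : X) (r : ℝ),
      (π (Metric.closedBall x r ×ˢ (Metric.closedBall x r)ᶜ)).toReal =
        max ((μ (Metric.closedBall x r)).toReal - (ν (Metric.closedBall x r)).toReal) 0 := by
  intro x r
  have : IsUltrametricDist X := ⟨hX⟩
  have : IsProbabilityMeasure π := hπ.1
  have hp0 : 0 < p := one_pos.trans_le hp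
  have hc : Continuous fun ab : X × X => dist ab.1 ab.2 ^ p :=
    continuous_dist.rpow_const fun _ => Or.inr hp0.le
  obtain ⟨C, hC⟩ := isCompact_univ.exists_bound_of_continuousOn hc.continuousOn
  set B := closedBall x r
  have hB : MeasurableSet B := measurableSet_closedBall
  have hflux : π (B ×ˢ Bᶜ) = 0 ∨ π (Bᶜ ×ˢ B) = 0 :=
    (isOptimalPlan_of_integral_eq_Wp_rpow hp0 hπ hopt).measure_eq_zero_or_measure_eq_zero
      hc.measurable (fun z => hC z trivial) (hB.prod hB.compl) (hB.compl.prod hB)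
      fun _ hz _ hw => IsUltrametricDist.exchange_lt
        (Real.strictMonoOn_rpow_Ici_of_exponent_pos hp0) hz.1 hz.2 hw.1 hw.2
  rw [← hπ.2.1, ← hπ.2.2, Measure.map_fst_apply_eq_add π hB hB,
    Measure.map_snd_apply_eq_add π hB hB,
    ENNReal.toReal_add (measure_ne_top _ _) (measure_ne_top _ _),
    ENNReal.toReal_add (measure_ne_top _ _) (measure_ne_top _ _)]
  rcases hflux with h | h <;> simp [h]

/-- In a compact ultrametric space, an optimal coupling moves through the boundary of any
closed ball exactly the amount of mass that is strictly necessary. -/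
theorem optimal_coupling_ball_flux
    {X : Type*} [MetricSpace X] [CompactSpace X] [MeasurableSpace X] [BorelSpace X]
    (hX : ∀ x y z : X, dist x z ≤ max (dist x y) (dist y z))
    (p : ℝ) (hp : 1 ≤ p)
    (μ ν : Measure X) [IsProbabilityMeasure μ] [IsProbabilityMeasure ν]
    (π : Measure (X × X)) (hπ : IsCoupling π μ ν)
    (hopt : ∫ ab, dist ab.1 ab.2 ^ p ∂π = Wp p μ ν ^ p) :
    ∀ (x : X) (r : ℝ),
      (π (Metric.closedBall x r ×ˢ (Metric.closedBall x r)ᶜ)).toReal =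
        max ((μ (Metric.closedBall x r)).toReal - (ν (Metric.closedBall x r)).toReal) 0 :=
  optimal_coupling_ball_flux_general hX p hp μ ν π hπ hopt
end

section
/- Let X be a compact ultrametric space and let 0 < s < dimH X, where dimH denotes Hausdorff dimension. Then there exist an integer k ≥ 2 and a real q > 1 with log k / log q ≥ s, a constant c > 0, and a map φ : Y(k,q) → X such that d_X(φ(a), φ(b)) ≥ c·d_{Y(k,q)}(a,b) for all a, b ∈ Y(k,q); that is, X contains a co-Lipschitz image of a regular ultrametric space of Hausdorff dimension at least s. -/
/-
Fix `s < t < dimH X`. The Hausdorff `t`-content `μ` of `X` is positive and finite, and in an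
ultrametric space a closed ball of radius `r` has content at most `r ^ t`. Cover a set `E` by
finitely many closed balls of radius `r`; distinct ones are more than `r` apart. Grouping the balls
greedily into `k` families of content between `r ^ t` and `2 r ^ t` cuts `E` into `k` pieces of
content at least `r ^ t = μ E / (2k)` whose points in different pieces are more than `r` apart.
Iterating gives a `k`-ary tree of sets, the cells of depth `n` having content at least
`μ X / (2k) ^ n`, and sending a branch to the limit point of its cells is co-Lipschitz for
`q = (2k) ^ (1/t)`. Finally `log k / log q = t log k / log (2k) ≥ s` once `k` is large.
-/

open scoped ENNReal NNReal Classical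

/-- The distance of the regular ultrametric space `Y(k,q) = {1,…,k}^ℕ`:
`d(x,y) = q^{-n}` where `n ≥ 1` is the first (1-based) index where `x` and `y` differ. -/
noncomputable def regDist (k : ℕ) (q : ℝ) (x y : ℕ → Fin k) : ℝ :=
  if x = y then 0 else q ^ (-((sInf {i : ℕ | x i ≠ y i} : ℕ) + 1 : ℤ))

open Metric MeasureTheory Set

namespace MeasureTheory.OuterMeasure

variable {α : Type*} (ν : OuterMeasure α) {ε : ℝ≥0∞}

theorem exists_subset_le_measure_sUnion_le_two_mul {F : Finset (Set α)}
    (hF : ∀ C ∈ F, ν C ≤ ε) (hεF : ε ≤ ν (⋃₀ F)) :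
    ∃ P ⊆ F, ε ≤ ν (⋃₀ P) ∧ ν (⋃₀ P) ≤ 2 * ε := by
  obtain ⟨P, hP, hmin⟩ := Finset.exists_min_image
    (F.powerset.filter fun P : Finset (Set α) => ε ≤ ν (⋃₀ ↑P)) Finset.card
    ⟨F, by simpa using hεF⟩
  rw [Finset.mem_filter, Finset.mem_powerset] at hP
  refine ⟨P, hP.1, hP.2, ?_⟩
  rcases P.eq_empty_or_nonempty with rfl | ⟨C, hC⟩
  · simp
  have herase : ν (⋃₀ ↑(P.erase C)) < ε := by
    by_contra! h
    have hsub : P.erase C ⊆ F := (P.erase_subset C).trans hP.1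
    exact (Finset.card_erase_lt_of_mem hC).not_ge
      (hmin _ (Finset.mem_filter.2 ⟨Finset.mem_powerset.2 hsub, h⟩))
  calc ν (⋃₀ P) = ν (C ∪ ⋃₀ ↑(P.erase C)) := by
        rw [← sUnion_insert, ← Finset.coe_insert, Finset.insert_erase hC]
    _ ≤ ν C + ν (⋃₀ ↑(P.erase C)) := measure_union_le _ _
    _ ≤ ε + ε := add_le_add (hF C (hP.1 hC)) herase.le
    _ = 2 * ε := (two_mul ε).symm

theorem exists_labelling_le_measure (hε : ε ≠ ∞) (j : ℕ) {F : Finset (Set α)}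
    (hF : ∀ C ∈ F, ν C ≤ ε) (hjF : 2 * j * ε ≤ ν (⋃₀ F)) :
    ∃ g : Set α → ℕ, ∀ i < j, ε ≤ ν (⋃₀ ↑(F.filter (g · = i))) := by
  induction j generalizing F with
  | zero => exact ⟨0, by simp⟩
  | succ j ih =>
    obtain ⟨P, hPF, hεP, hP2⟩ := exists_subset_le_measure_sUnion_le_two_mul ν hF <|
      le_trans (le_mul_of_one_le_left' (by norm_cast; omega)) hjF
    have hrest : 2 * j * ε ≤ ν (⋃₀ ↑(F \ P)) := by
      refine ENNReal.le_of_add_le_add_right (a := 2 * ε) (by finiteness) ?_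
      calc 2 * j * ε + 2 * ε = 2 * ↑(j + 1) * ε := by push_cast; ring
        _ ≤ ν (⋃₀ ↑P ∪ ⋃₀ ↑(F \ P)) := by
          rwa [← sUnion_union, ← Finset.coe_union, Finset.union_sdiff_of_subset hPF]
        _ ≤ ν (⋃₀ ↑(F \ P)) + 2 * ε :=
          (measure_union_le _ _).trans (by rw [add_comm]; gcongr)
    obtain ⟨g, hg⟩ := ih (fun C hC => hF C (Finset.sdiff_subset hC)) hrest
    refine ⟨fun C => if C ∈ P then 0 else g C + 1, fun i hi => ?_⟩
    rcases i with _ | i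
    · refine hεP.trans (measure_mono (sUnion_subset_sUnion fun C hC => ?_))
      simp [hPF hC, Finset.mem_coe.1 hC]
    · refine (hg i (by omega)).trans (measure_mono (sUnion_subset_sUnion fun C hC => ?_))
      simp_all

end MeasureTheory.OuterMeasure

section HausdorffContent

variable {X : Type*} [MetricSpace X]

noncomputable def hausdorffContent (d : ℝ) : OuterMeasure X :=
  OuterMeasure.boundedBy fun E => ediam E ^ d

theorem hausdorffContent_le_ediam_rpow (d : ℝ) (E : Set X) :
    hausdorffContent d E ≤ ediam E ^ d :=
  OuterMeasure.boundedBy_le E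

theorem hausdorffContent_ne_top [CompactSpace X] {d : ℝ} (hd : 0 ≤ d) (E : Set X) :
    hausdorffContent d E ≠ ∞ :=
  ne_top_of_le_ne_top (ENNReal.rpow_ne_top_of_nonneg hd <|
    ne_top_of_le_ne_top isCompact_univ.isBounded.ediam_ne_top (ediam_mono (subset_univ E)))
    (hausdorffContent_le_ediam_rpow d E)

theorem hausdorffMeasure_eq_zero_of_hausdorffContent_eq_zero [MeasurableSpace X] [BorelSpace X]
    {d : ℝ} (hd : 0 < d) {E : Set X} (h : hausdorffContent d E = 0) : μH[d] E = 0 := by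
  rw [Measure.hausdorffMeasure_apply]
  refine le_antisymm (iSup₂_le fun r hr => ENNReal.le_of_forall_pos_le_add fun ε hε _ => ?_)
    zero_le
  -- a cover of `E` with `∑ diam ^ d < r ^ d` consists of sets of diameter less than `r`
  obtain ⟨U, hEU, hU⟩ : ∃ U : ℕ → Set X, E ⊆ ⋃ n, U n ∧
      ∑' n, ⨆ _ : (U n).Nonempty, ediam (U n) ^ d < min (ε : ℝ≥0∞) (r ^ d) := by
    have hpos : hausdorffContent d E < min (ε : ℝ≥0∞) (r ^ d) :=
      h ▸ lt_min (by exact_mod_cast hε) (ENNReal.rpow_pos_of_nonneg hr hd.le)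
    simpa only [hausdorffContent, OuterMeasure.boundedBy_apply, iInf_lt_iff, exists_prop] using hpos
  have hdiam : ∀ n, ediam (U n) ≤ r := by
    intro n
    rcases (U n).eq_empty_or_nonempty with hn | hn
    · simp [hn]
    refine ((ENNReal.rpow_lt_rpow_iff hd).1 ?_).le
    refine lt_of_le_of_lt ?_ (hU.trans_le (min_le_right _ _))
    exact le_trans (le_iSup (fun _ : (U n).Nonempty => ediam (U n) ^ d) hn) (ENNReal.le_tsum n)
  rw [zero_add]
  exact iInf₂_le_of_le U hEU (iInf_le_of_le hdiam (hU.trans_le (min_le_left _ _)).le)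

theorem hausdorffContent_ne_zero_of_lt_dimH {d : ℝ} (hd : 0 < d) {E : Set X}
    (h : ENNReal.ofReal d < dimH E) : hausdorffContent d E ≠ 0 := by
  borelize X
  intro h0
  have := hausdorffMeasure_of_lt_dimH (d := d.toNNReal) h
  rw [Real.coe_toNNReal d hd.le, hausdorffMeasure_eq_zero_of_hausdorffContent_eq_zero hd h0] at this
  exact ENNReal.zero_ne_top this

end HausdorffContent

namespace IsUltrametricDist

variable {X : Type*} [PseudoMetricSpace X] [IsUltrametricDist X]

theorem ediam_closedBall_le (x : X) (r : ℝ) : ediam (closedBall x r) ≤ ENNReal.ofReal r :=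
  ediam_le fun y hy z hz => by
    rw [edist_dist]
    exact ENNReal.ofReal_le_ofReal <| (dist_triangle_max y x z).trans <|
      max_le (mem_closedBall.1 hy) (mem_closedBall'.1 hz)

theorem lt_dist_of_closedBall_ne {x x' y y' : X} {r : ℝ}
    (hne : closedBall x r ≠ closedBall x' r) (hy : y ∈ closedBall x r)
    (hy' : y' ∈ closedBall x' r) : r < dist y y' := by
  by_contra! hle
  rw [closedBall_eq_of_mem hy, closedBall_eq_of_mem hy',
    closedBall_eq_of_mem (mem_closedBall'.2 hle)] at hne
  exact hne rfl

end IsUltrametricDist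

theorem exists_separated_le_hausdorffContent {X : Type*} [MetricSpace X] [CompactSpace X]
    [IsUltrametricDist X] {d r : ℝ} (hd : 0 ≤ d) (hr : 0 < r) (k : ℕ) {E : Set X}
    (hE : 2 * k * ENNReal.ofReal r ^ d ≤ hausdorffContent d E) :
    ∃ D : Fin k → Set X, (∀ i, D i ⊆ E) ∧
      (∀ i, ENNReal.ofReal r ^ d ≤ hausdorffContent d (D i)) ∧
      ∀ i j, i ≠ j → ∀ x ∈ D i, ∀ y ∈ D j, r < dist x y := by
  obtain ⟨Z, -, hZ, hcover⟩ := finite_cover_balls_of_compact (isCompact_univ (X := X)) hr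
  let F : Finset (Set X) := hZ.toFinset.image (closedBall · r)
  have hF : ⋃₀ (F : Set (Set X)) = univ := by
    refine eq_univ_of_forall fun x => ?_
    obtain ⟨z, hz, hxz⟩ := mem_iUnion₂.1 (hcover (mem_univ x))
    exact ⟨closedBall z r, by simpa [F] using ⟨z, hz, rfl⟩, ball_subset_closedBall hxz⟩
  have hball : ∀ C ∈ F, (hausdorffContent d).restrict E C ≤ ENNReal.ofReal r ^ d := by
    simp only [F, Finset.mem_image, OuterMeasure.restrict_apply]
    rintro _ ⟨z, -, rfl⟩
    calc hausdorffContent d (closedBall z r ∩ E) ≤ ediam (closedBall z r) ^ d :=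
          (measure_mono inter_subset_left).trans (hausdorffContent_le_ediam_rpow d _)
      _ ≤ ENNReal.ofReal r ^ d := by gcongr; exact IsUltrametricDist.ediam_closedBall_le z r
  obtain ⟨g, hg⟩ := OuterMeasure.exists_labelling_le_measure _ (by finiteness) k hball
    (by rwa [OuterMeasure.restrict_apply, hF, univ_inter])
  refine ⟨fun i => ⋃₀ ↑(F.filter (g · = i)) ∩ E, fun i => inter_subset_right,
    fun i => (hg i i.2).trans_eq (OuterMeasure.restrict_apply _ _ _), ?_⟩
  rintro i j hij x ⟨⟨C, hC, hxC⟩, -⟩ y ⟨⟨C', hC', hyC'⟩, -⟩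
  simp only [F, Finset.coe_filter, Finset.mem_image, mem_ofPred_eq] at hC hC'
  obtain ⟨⟨z, -, rfl⟩, hgi⟩ := hC
  obtain ⟨⟨z', -, rfl⟩, hgj⟩ := hC'
  exact IsUltrametricDist.lt_dist_of_closedBall_ne
    (fun h => hij (Fin.ext (by rw [← hgi, ← hgj, h]))) hxC hyC'

section CantorScheme

variable {X : Type*} {k : ℕ}

def schemeCell (D : ℕ → Set X → Fin k → Set X) (a : ℕ → Fin k) : ℕ → Set X
  | 0 => univ
  | n + 1 => D n (schemeCell D a n) (a n)

theorem schemeCell_congr (D : ℕ → Set X → Fin k → Set X) {a b : ℕ → Fin k} {n : ℕ}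
    (hab : ∀ i < n, a i = b i) : schemeCell D a n = schemeCell D b n := by
  induction n with
  | zero => rfl
  | succ n ih =>
    simp only [schemeCell, ih fun i hi => hab i (by omega), hab n n.lt_succ_self]

variable [MetricSpace X]

theorem le_dist_of_mem_closure {A B : Set X} {δ : ℝ}
    (h : ∀ x ∈ A, ∀ y ∈ B, δ ≤ dist x y) {x y : X} (hx : x ∈ closure A)
    (hy : y ∈ closure B) : δ ≤ dist x y := by
  have : closure (A ×ˢ B) ⊆ {p : X × X | δ ≤ dist p.1 p.2} :=
    closure_minimal (fun p hp => h _ hp.1 _ hp.2) (isClosed_le continuous_const continuous_dist)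
  exact this (show (x, y) ∈ closure (A ×ˢ B) by rw [closure_prod_eq]; exact ⟨hx, hy⟩)

theorem exists_regDist_le_dist_of_scheme [CompactSpace X] {q c : ℝ} (S : ℕ → Set (Set X))
    (hS₀ : univ ∈ S 0) (hne : ∀ n, ∀ E ∈ S n, E.Nonempty)
    (hsplit : ∀ n, ∀ E ∈ S n, ∃ D : Fin k → Set X,
      (∀ i, D i ⊆ E ∧ D i ∈ S (n + 1)) ∧
      ∀ i j, i ≠ j → ∀ x ∈ D i, ∀ y ∈ D j, c * q ^ (-((n : ℤ) + 1)) ≤ dist x y) :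
    ∃ φ : (ℕ → Fin k) → X, ∀ a b, c * regDist k q a b ≤ dist (φ a) (φ b) := by
  choose! D hD hsep using hsplit
  have hmem : ∀ a n, schemeCell D a n ∈ S n := fun a n => by
    induction n with
    | zero => exact hS₀
    | succ n ih => exact (hD n _ ih (a n)).2
  have hpoint : ∀ a, (⋂ n, closure (schemeCell D a n)).Nonempty := fun a =>
    IsCompact.nonempty_iInter_of_sequence_nonempty_isCompact_isClosed _
      (fun n => closure_mono (hD n _ (hmem a n) (a n)).1)
      (fun n => (hne n _ (hmem a n)).closure) isClosed_closure.isCompact fun _ => isClosed_closure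
  choose φ hφ using hpoint
  refine ⟨φ, fun a b => ?_⟩
  by_cases hab : a = b
  · simp [regDist, hab]
  set n := sInf {i | a i ≠ b i}
  have hn : a n ≠ b n := Nat.sInf_mem (Function.ne_iff.1 hab)
  have hcell : schemeCell D a n = schemeCell D b n :=
    schemeCell_congr D fun i hi => not_not.1 (Nat.notMem_of_lt_sInf hi)
  rw [regDist, if_neg hab]
  refine le_dist_of_mem_closure (hsep n _ (hmem a n) _ _ hn)
    (mem_iInter.1 (hφ a) (n + 1)) ?_
  simpa only [schemeCell, hcell] using mem_iInter.1 (hφ b) (n + 1)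

end CantorScheme

theorem exists_nat_mul_log_two_mul_le {s t : ℝ} (hst : s < t) :
    ∃ k : ℕ, 2 ≤ k ∧ s * Real.log (2 * k) ≤ t * Real.log k := by
  have hlim : Filter.Tendsto (fun k : ℕ => (t - s) * Real.log k - s * Real.log 2)
      Filter.atTop Filter.atTop :=
    Filter.tendsto_atTop_add_const_right _ _ <|
      (Real.tendsto_log_atTop.comp tendsto_natCast_atTop_atTop).const_mul_atTop (sub_pos.2 hst)
  obtain ⟨k, hk, hk2⟩ :=
    ((hlim.eventually_ge_atTop 0).and (Filter.eventually_ge_atTop 2)).exists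
  refine ⟨k, hk2, ?_⟩
  rw [Real.log_mul two_ne_zero (by positivity)]
  linarith

theorem ofReal_rpow_mul_ofReal_mul_zpow_succ_rpow {c q t : ℝ} (hc : 0 ≤ c) (hq : 0 < q)
    (ht : 0 ≤ t) (n : ℤ) :
    ENNReal.ofReal (q ^ t) * ENNReal.ofReal (c * q ^ (-(n + 1))) ^ t =
      ENNReal.ofReal (c * q ^ (-n)) ^ t := by
  have : c * q ^ (-n) = c * q ^ (-(n + 1)) * q := by
    rw [mul_assoc, ← zpow_add_one₀ hq.ne', neg_add, neg_add_cancel_right]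
  rw [this, ENNReal.ofReal_mul (p := c * q ^ (-(n + 1))) (by positivity),
    ENNReal.mul_rpow_of_nonneg _ _ ht, ENNReal.ofReal_rpow_of_pos hq, mul_comm]

theorem log_div_log_rpow_inv {k : ℝ} (hk : 0 < k) (t : ℝ) :
    Real.log k / Real.log ((2 * k) ^ t⁻¹) = t * Real.log k / Real.log (2 * k) := by
  rw [Real.log_rpow (by positivity)]
  field_simp

theorem exists_regDist_le_dist_of_hausdorffContent_ne_zero {X : Type*} [MetricSpace X]
    [CompactSpace X] [IsUltrametricDist X] {t : ℝ} (ht : 0 < t)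
    (h₀ : hausdorffContent t (univ : Set X) ≠ 0) {k : ℕ} (hk : 0 < k) :
    ∃ c > 0, ∃ φ : (ℕ → Fin k) → X,
      ∀ a b, c * regDist k ((2 * k) ^ t⁻¹) a b ≤ dist (φ a) (φ b) := by
  set q : ℝ := (2 * k) ^ t⁻¹
  have hq : 0 < q := by positivity
  have hqt : ENNReal.ofReal (q ^ t) = 2 * k := by
    rw [Real.rpow_inv_rpow (by positivity) ht.ne']
    exact_mod_cast ENNReal.ofReal_natCast (2 * k)
  set μ : OuterMeasure X := hausdorffContent t
  set c : ℝ := (μ univ).toReal ^ t⁻¹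
  have hc : 0 < c := by
    have := ENNReal.toReal_pos h₀ (hausdorffContent_ne_top ht.le _)
    positivity
  refine ⟨c, hc, exists_regDist_le_dist_of_scheme
    (fun n => {E | ENNReal.ofReal (c * q ^ (-(n : ℤ))) ^ t ≤ μ E}) ?_ ?_ ?_⟩
  · simp only [mem_ofPred_eq, CharP.cast_eq_zero, neg_zero, zpow_zero, mul_one]
    rw [ENNReal.ofReal_rpow_of_nonneg hc.le ht.le,
      Real.rpow_inv_rpow ENNReal.toReal_nonneg ht.ne',
      ENNReal.ofReal_toReal (hausdorffContent_ne_top ht.le _)]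
  · refine fun n E hE => nonempty_iff_ne_empty.2 fun hE0 => ?_
    rw [mem_ofPred_eq, hE0, measure_empty, nonpos_iff_eq_zero] at hE
    exact (ENNReal.rpow_pos (ENNReal.ofReal_pos.2 (by positivity)) ENNReal.ofReal_ne_top).ne' hE
  · intro n E hE
    rw [mem_ofPred_eq, ← ofReal_rpow_mul_ofReal_mul_zpow_succ_rpow hc.le hq ht.le, hqt] at hE
    obtain ⟨D, hDE, hDμ, hDsep⟩ :=
      exists_separated_le_hausdorffContent ht.le (by positivity) k hE
    refine ⟨D, fun i => ⟨hDE i, ?_⟩, fun i j hij x hx y hy => (hDsep i j hij x hx y hy).le⟩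
    simpa only [mem_ofPred_eq, Nat.cast_add, Nat.cast_one] using hDμ i

theorem exists_coLipschitz_regular_ultrametric_general
    {X : Type*} [MetricSpace X] [CompactSpace X]
    (hX : ∀ x y z : X, dist x z ≤ max (dist x y) (dist y z))
    (s : ℝ) (hsd : ENNReal.ofReal s < dimH (Set.univ : Set X)) :
    ∃ (k : ℕ) (q : ℝ), 2 ≤ k ∧ 1 < q ∧ s ≤ Real.log k / Real.log q ∧
      ∃ (c : ℝ) (φ : (ℕ → Fin k) → X), 0 < c ∧
        ∀ a b : ℕ → Fin k, c * regDist k q a b ≤ dist (φ a) (φ b) := by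
  have : IsUltrametricDist X := ⟨hX⟩
  obtain ⟨t, -, hst, htX⟩ := ENNReal.lt_iff_exists_real_btwn.1 hsd
  obtain ⟨hst, ht⟩ := ENNReal.ofReal_lt_ofReal_iff'.1 hst
  obtain ⟨k, hk, hlog⟩ := exists_nat_mul_log_two_mul_le hst
  obtain ⟨c, hc, φ, hφ⟩ := exists_regDist_le_dist_of_hausdorffContent_ne_zero ht
    (hausdorffContent_ne_zero_of_lt_dimH ht htX) (k := k) (by omega)
  refine ⟨k, _, hk, Real.one_lt_rpow (by norm_cast; omega) (inv_pos.2 ht), ?_, c, φ, hc, hφ⟩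
  rw [log_div_log_rpow_inv (by positivity), le_div_iff₀ (Real.log_pos (by norm_cast; omega))]
  exact hlog

/-- Theorem 1.7: any compact ultrametric space contains, for any `s < dimH X`, a co-Lipschitz
image of a regular ultrametric space `Y(k,q)` of Hausdorff dimension `log k / log q ≥ s`. -/
theorem exists_coLipschitz_regular_ultrametric
    {X : Type*} [MetricSpace X] [CompactSpace X]
    (hX : ∀ x y z : X, dist x z ≤ max (dist x y) (dist y z))
    (s : ℝ) (hs : 0 < s) (hsd : ENNReal.ofReal s < dimH (Set.univ : Set X)) :
    ∃ (k : ℕ) (q : ℝ), 2 ≤ k ∧ 1 < q ∧ s ≤ Real.log k / Real.log q ∧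
      ∃ (c : ℝ) (φ : (ℕ → Fin k) → X), 0 < c ∧
        ∀ a b : ℕ → Fin k, c * regDist k q a b ≤ dist (φ a) (φ b) :=
  exists_coLipschitz_regular_ultrametric_general hX s hsd
end

section
/- Let α > 1 and let s > 1/(α − 1). Then there exists ε₀ > 0 such that for every ε ∈ (0, ε₀), the Banach cube BC((n^{−α})_{n≥1}) can be covered by at most exp(ε^{−s}) closed balls of radius ε: there is a finite set F ⊆ ℓ¹ with card F ≤ exp(ε^{−s}) and BC((n^{−α})) ⊆ ⋃_{x ∈ F} B̄(x,ε). -/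
open Filter Real MeasureTheory
open scoped ENNReal NNReal Topology

instance : Fact ((1 : ℝ≥0∞) ≤ 1) := ⟨le_rfl⟩

/-- The Banach cube `BC((a_n)) = {x ∈ ℓ¹ | 0 ≤ x_n ≤ a_n}`. -/
def BCube (a : ℕ → ℝ) : Set (lp (fun _ : ℕ => ℝ) 1) :=
  {x | ∀ n : ℕ, 0 ≤ x n ∧ x n ≤ a n}


-- Bernoulli step
lemma aux_bern (α : ℝ) (hα : 1 < α) (x : ℝ) (hx : 1 ≤ x) :
    (x + α) * (x + 1) ^ (-α) ≤ x ^ (1 - α) := by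
  have hx0 : (0:ℝ) < x := by linarith
  have hx1 : (0:ℝ) < x + 1 := by linarith
  have hinv : (0:ℝ) ≤ 1/x := by positivity
  have hb := one_add_mul_self_le_rpow_one_add (by linarith : (-1:ℝ) ≤ 1/x) hα.le
  have e1 : (1 + 1/x) ^ α = (x+1)^α * x^(-α) := by
    rw [show (1:ℝ) + 1/x = (x+1) * x⁻¹ by field_simp,
      Real.mul_rpow hx1.le (inv_nonneg.2 hx0.le), Real.inv_rpow hx0.le, ← Real.rpow_neg hx0.le]
  have e2 : (x+1)^α * (x+1)^(-α) = 1 := by rw [← Real.rpow_add hx1]; simp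
  have e3 : x * x^(-α) = x^(1-α) := by
    rw [show (1:ℝ)-α = 1 + (-α) by ring, Real.rpow_add hx0, Real.rpow_one]
  calc (x + α) * (x+1)^(-α) = (x * (1 + α*(1/x))) * (x+1)^(-α) := by
        congr 1
        field_simp
    _ ≤ (x * ((1+1/x)^α)) * (x+1)^(-α) :=
        mul_le_mul_of_nonneg_right (mul_le_mul_of_nonneg_left hb hx0.le)
          (Real.rpow_nonneg hx1.le _)
    _ = (x * x^(-α)) * ((x+1)^α * (x+1)^(-α)) := by rw [e1]; ring
    _ = x^(1-α) := by rw [e2, e3, mul_one]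

lemma aux_step (α : ℝ) (hα : 1 < α) (x : ℝ) (hx : 1 ≤ x) :
    (α - 1) * (x + 1) ^ (-α) ≤ x ^ (1 - α) - (x + 1) ^ (1 - α) := by
  have hx1 : (0:ℝ) < x + 1 := by linarith
  have h1 : (x + 1) ^ (1 - α) = (x + 1) * (x + 1) ^ (-α) := by
    rw [show (1:ℝ) - α = 1 + (-α) by ring, Real.rpow_add hx1, Real.rpow_one]
  have h2 := aux_bern α hα x hx
  nlinarith [Real.rpow_nonneg hx1.le (-α)]

lemma aux_summable_shift (α : ℝ) (hα : 1 < α) (N : ℕ) :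
    Summable (fun n : ℕ => ((n : ℝ) + N + 1) ^ (-α)) := by
  have h : Summable (fun n : ℕ => (n : ℝ) ^ (-α)) :=
    Real.summable_nat_rpow.2 (by linarith)
  have h2 := (summable_nat_add_iff (N + 1)).2 h
  refine h2.congr fun n => ?_
  push_cast
  ring_nf

lemma aux_tail (α : ℝ) (hα : 1 < α) (N : ℕ) (hN : 1 ≤ N) :
    (∑' n : ℕ, ((n : ℝ) + N + 1) ^ (-α)) ≤ (N : ℝ) ^ (1 - α) / (α - 1) := by
  have hα1 : (0:ℝ) < α - 1 := by linarith
  have hN1 : (1:ℝ) ≤ (N : ℝ) := by exact_mod_cast hN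
  set f : ℕ → ℝ := fun n => ((n : ℝ) + N) ^ (1 - α) with hf
  refine Summable.tsum_le_of_sum_le (aux_summable_shift α hα N) fun u => ?_
  obtain ⟨M, hM⟩ := u.exists_nat_subset_range
  calc ∑ n ∈ u, ((n : ℝ) + N + 1) ^ (-α)
      ≤ ∑ n ∈ Finset.range M, ((n : ℝ) + N + 1) ^ (-α) :=
        Finset.sum_le_sum_of_subset_of_nonneg hM fun i _ _ => Real.rpow_nonneg (by positivity) _
    _ ≤ ∑ n ∈ Finset.range M, (f n - f (n + 1)) / (α - 1) := by
        refine Finset.sum_le_sum fun i _ => ?_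
        have hx : (1:ℝ) ≤ (i : ℝ) + N := by
          have : (0:ℝ) ≤ (i:ℝ) := Nat.cast_nonneg i
          linarith
        have := aux_step α hα ((i : ℝ) + N) hx
        rw [le_div_iff₀ hα1]
        have e : f (i + 1) = ((i : ℝ) + N + 1) ^ (1 - α) := by
          simp only [hf]; push_cast; ring_nf
        rw [hf]
        simp only []
        push_cast
        calc ((i:ℝ) + N + 1) ^ (-α) * (α - 1)
            = (α - 1) * (((i:ℝ) + N) + 1) ^ (-α) := by ring_nf
          _ ≤ ((i:ℝ) + N) ^ (1-α) - (((i:ℝ) + N) + 1) ^ (1-α) := this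
          _ = ((i:ℝ) + N) ^ (1-α) - ((i:ℝ) + 1 + N) ^ (1-α) := by ring_nf
    _ = (f 0 - f M) / (α - 1) := by rw [← Finset.sum_div, Finset.sum_range_sub' f M]
    _ ≤ f 0 / (α - 1) := by
        have : (0:ℝ) ≤ f M := Real.rpow_nonneg (by positivity) _
        gcongr
        linarith
    _ = (N : ℝ) ^ (1 - α) / (α - 1) := by simp [hf]

set_option maxHeartbeats 1000000 in
lemma aux_main (α s t : ℝ) (hα : 1 < α) (ht0 : 0 < t)
    (ε : ℝ) (hε : 0 < ε) (hε1 : ε < 1)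
    (hE2 : 2/(α-1) ≤ ε ^ (-(t*(α-1)-1)))
    (hE3 : 2*(Real.log 5 + (t+1) * Real.log ε⁻¹) * ε ^ (s-t) ≤ 1) :
    ∃ F : Finset (lp (fun _ : ℕ => ℝ) 1),
      (F.card : ℝ) ≤ Real.exp (ε ^ (-s)) ∧
      (BCube fun n : ℕ => ((n : ℝ) + 1) ^ (-α)) ⊆ ⋃ x ∈ F, Metric.closedBall x ε := by
  classical
  have hα1 : (0:ℝ) < α - 1 := by linarith
  set N : ℕ := ⌈ε ^ (-t)⌉₊ with hN_def
  have hεt_pos : 0 < ε ^ (-t) := Real.rpow_pos_of_pos hε _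
  have hN1 : 1 ≤ N := Nat.ceil_pos.2 hεt_pos
  have hNpos : (0:ℝ) < (N:ℝ) := by exact_mod_cast hN1
  have hNge : ε ^ (-t) ≤ (N:ℝ) := Nat.le_ceil _
  have hεt1 : (1:ℝ) ≤ ε ^ (-t) := by
    have := Real.rpow_le_rpow_of_exponent_ge hε hε1.le (neg_nonpos.2 ht0.le)
    simpa using this
  have hNle : (N:ℝ) ≤ 2 * ε ^ (-t) := by
    have h := Nat.ceil_lt_add_one hεt_pos.le
    rw [← hN_def] at h
    linarith
  set δ : ℝ := ε / (2 * N) with hδ_def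
  have hδ : 0 < δ := by positivity
  set K : ℕ := ⌊2 * (N:ℝ) / ε⌋₊ with hK_def
  have hKle : (K:ℝ) ≤ 2 * N / ε := Nat.floor_le (by positivity)
  have hKpos : (0:ℝ) < (K:ℝ) + 1 := by positivity
  -- grid points
  have hmem : ∀ f : Fin N → Fin (K+1),
      Memℓp (fun n : ℕ => if h : n < N then ((f ⟨n, h⟩ : ℕ) : ℝ) * δ else 0) 1 := by
    intro f
    apply memℓp_gen
    apply summable_of_ne_finset_zero (s := Finset.range N)
    intro n hn
    rw [Finset.mem_range] at hn
    simp [hn]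
  set G : (Fin N → Fin (K+1)) → lp (fun _ : ℕ => ℝ) 1 :=
    fun f => ⟨fun n => if h : n < N then ((f ⟨n, h⟩ : ℕ) : ℝ) * δ else 0, hmem f⟩ with hG_def
  refine ⟨Finset.image G Finset.univ, ?_, ?_⟩
  · -- cardinality bound
    have hcard : (Finset.image G Finset.univ).card ≤ (K+1)^N := by
      refine le_trans Finset.card_image_le ?_
      simp [Finset.card_univ]
    have hεinv : 0 ≤ Real.log ε⁻¹ := by
      rw [Real.log_inv]; linarith [Real.log_neg hε hε1]
    have hεt1' : (1:ℝ) ≤ ε ^ (-(t+1)) := by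
      have := Real.rpow_le_rpow_of_exponent_ge hε hε1.le (by linarith : -(t+1) ≤ 0)
      simpa using this
    have hK5 : (K:ℝ) + 1 ≤ 5 * ε ^ (-(t+1)) := by
      have h2 : 2*(N:ℝ)/ε ≤ (4 * ε^(-t)) / ε :=
        (div_le_div_iff_of_pos_right hε).2 (by linarith)
      have h3 : (4 * ε^(-t)) / ε = 4 * ε^(-(t+1)) := by
        rw [show -(t+1) = -t + (-1) by ring, Real.rpow_add hε, Real.rpow_neg_one,
          div_eq_mul_inv]
        ring
      rw [h3] at h2
      linarith
    have hlogK : Real.log ((K:ℝ)+1) ≤ Real.log 5 + (t+1) * Real.log ε⁻¹ := by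
      have h := Real.log_le_log hKpos hK5
      rw [Real.log_mul (by norm_num) (ne_of_gt (Real.rpow_pos_of_pos hε _)),
        Real.log_rpow hε] at h
      rw [Real.log_inv]
      rw [Real.log_inv] at hεinv
      linarith
    have hlogK0 : 0 ≤ Real.log ((K:ℝ)+1) :=
      Real.log_nonneg (by linarith [(Nat.cast_nonneg K : (0:ℝ) ≤ K)])
    have hfrac : 2 * (Real.log 5 + (t+1) * Real.log ε⁻¹) ≤ ε ^ (-(s-t)) := by
      have hpow : 0 < ε ^ (s-t) := Real.rpow_pos_of_pos hε _
      rw [show ε ^ (-(s-t)) = 1/ε^(s-t) by rw [Real.rpow_neg hε.le, one_div]]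
      rw [le_div_iff₀ hpow]
      linarith
    have hlog : (N:ℝ) * Real.log ((K:ℝ)+1) ≤ ε ^ (-s) :=
      calc (N:ℝ) * Real.log ((K:ℝ)+1)
          ≤ (2 * ε^(-t)) * (Real.log 5 + (t+1) * Real.log ε⁻¹) := by
            have h5 : 0 ≤ Real.log 5 + (t+1) * Real.log ε⁻¹ := by
              have : (0:ℝ) ≤ Real.log 5 := Real.log_nonneg (by norm_num)
              nlinarith
            exact mul_le_mul hNle hlogK hlogK0 (by positivity)
        _ = (2*(Real.log 5 + (t+1)*Real.log ε⁻¹)) * ε^(-t) := by ring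
        _ ≤ ε^(-(s-t)) * ε^(-t) :=
            mul_le_mul_of_nonneg_right hfrac (Real.rpow_nonneg hε.le _)
        _ = ε^(-s) := by rw [← Real.rpow_add hε]; ring_nf
    calc ((Finset.image G Finset.univ).card : ℝ)
        ≤ (((K+1)^N : ℕ) : ℝ) := by exact_mod_cast hcard
      _ = ((K:ℝ)+1)^N := by push_cast; ring
      _ = Real.exp ((N:ℝ) * Real.log ((K:ℝ)+1)) := by
          rw [← Real.log_pow, Real.exp_log (pow_pos hKpos N)]
      _ ≤ Real.exp (ε ^ (-s)) := Real.exp_le_exp.2 hlog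
  · -- covering
    intro x hx
    have hxle1 : ∀ n : ℕ, x n ≤ 1 := fun n =>
      (hx n).2.trans (Real.rpow_le_one_of_one_le_of_nonpos
        (by linarith [(Nat.cast_nonneg n : (0:ℝ) ≤ n)] : (1:ℝ) ≤ (n:ℝ)+1) (by linarith))
    have hfl : ∀ i : Fin N, ⌊x i / δ⌋₊ < K + 1 := by
      intro i
      rw [Nat.lt_succ_iff, hK_def]
      apply Nat.floor_le_floor
      have h1δ : 1/δ = 2*N/ε := by rw [hδ_def, one_div_div]
      calc x i / δ ≤ 1/δ := by gcongr; exact hxle1 i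
        _ = 2*N/ε := h1δ
    set f : Fin N → Fin (K+1) := fun i => ⟨⌊x i / δ⌋₊, hfl i⟩ with hf_def
    refine Set.mem_iUnion₂.2 ⟨G f, Finset.mem_image_of_mem G (Finset.mem_univ f), ?_⟩
    rw [Metric.mem_closedBall, dist_eq_norm]
    have hGf : ∀ n : ℕ, (G f) n = if h : n < N then (⌊x n / δ⌋₊ : ℝ) * δ else 0 := by
      intro n; rfl
    apply lp.norm_le_of_tsum_le (by norm_num) hε.le
    have hsum0 : Summable (fun i => ‖(x - G f) i‖ ^ (1:ℝ≥0∞).toReal) :=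
      (lp.memℓp (x - G f)).summable (by norm_num)
    simp only [ENNReal.toReal_one, Real.rpow_one] at hsum0 ⊢
    have hsum : Summable (fun i : ℕ => ‖x i - (G f) i‖) := by
      refine hsum0.congr fun i => ?_
      rw [lp.coeFn_sub, Pi.sub_apply]
    have herr1 : ∀ i : ℕ, i < N → ‖x i - (G f) i‖ ≤ δ := by
      intro i hi
      rw [hGf i, dif_pos hi, Real.norm_eq_abs, abs_of_nonneg ?pos]
      case pos =>
        have h1 := Nat.floor_le (div_nonneg (hx i).1 hδ.le)
        have h2 := (le_div_iff₀ hδ).1 h1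
        linarith
      · have h2 := Nat.lt_floor_add_one (x i / δ)
        have h3 := (div_lt_iff₀ hδ).1 h2
        nlinarith
    have herr2 : ∀ i : ℕ, ‖x (i + N) - (G f) (i + N)‖ ≤ ((i:ℝ) + N + 1) ^ (-α) := by
      intro i
      rw [hGf (i+N), dif_neg (by omega), sub_zero, Real.norm_eq_abs,
        abs_of_nonneg (hx (i+N)).1]
      have h : x (i+N) ≤ (((i + N : ℕ):ℝ) + 1)^(-α) := (hx (i+N)).2
      rw [show ((i + N : ℕ):ℝ) = (i:ℝ) + N by push_cast; ring] at h
      exact h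
    have hNδ : (N:ℝ) * δ = ε / 2 := by
      rw [hδ_def]; field_simp
    have htail : (N:ℝ)^(1-α)/(α-1) ≤ ε/2 := by
      have h1 : (N:ℝ)^(1-α) ≤ (ε^(-t))^(1-α) :=
        Real.rpow_le_rpow_of_nonpos hεt_pos hNge (by linarith)
      have h2 : (ε^(-t))^(1-α) = ε^(t*(α-1)) := by
        rw [← Real.rpow_mul hε.le]; congr 1; ring
      have hu : 0 < ε ^ (t*(α-1)-1) := Real.rpow_pos_of_pos hε _
      have h3 : 2 * ε^(t*(α-1)-1) ≤ α - 1 := by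
        rw [Real.rpow_neg hε.le] at hE2
        have h4 := (div_le_iff₀ hα1).1 hE2
        have hPP : ε^(t*(α-1)-1) * (ε^(t*(α-1)-1))⁻¹ = 1 := mul_inv_cancel₀ hu.ne'
        nlinarith
      have h4 : ε^(t*(α-1)) = ε^(t*(α-1)-1) * ε := by
        rw [← Real.rpow_add_one hε.ne']; congr 1; ring
      calc (N:ℝ)^(1-α)/(α-1) ≤ (ε^(t*(α-1)))/(α-1) :=
            (div_le_div_iff_of_pos_right hα1).2 (h2 ▸ h1)
        _ ≤ ε/2 := by
            rw [h4, div_le_div_iff₀ hα1 (by norm_num : (0:ℝ) < 2)]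
            nlinarith
    calc ∑' i, ‖(x - G f) i‖ = ∑' i, ‖x i - (G f) i‖ := by
          apply tsum_congr; intro i; rw [lp.coeFn_sub, Pi.sub_apply]
      _ = (∑ i ∈ Finset.range N, ‖x i - (G f) i‖) + ∑' i, ‖x (i+N) - (G f) (i+N)‖ :=
          (Summable.sum_add_tsum_nat_add N hsum).symm
      _ ≤ (N:ℝ) * δ + (N:ℝ)^(1-α)/(α-1) := by
          apply add_le_add
          · calc ∑ i ∈ Finset.range N, ‖x i - (G f) i‖
                ≤ ∑ _i ∈ Finset.range N, δ :=
                  Finset.sum_le_sum fun i hi => herr1 i (Finset.mem_range.1 hi)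
              _ = (N:ℝ) * δ := by
                  rw [Finset.sum_const, Finset.card_range, nsmul_eq_mul]
          · calc ∑' i, ‖x (i+N) - (G f) (i+N)‖
                ≤ ∑' i : ℕ, ((i:ℝ)+N+1)^(-α) :=
                  Summable.tsum_le_tsum herr2 ((summable_nat_add_iff N).2 hsum)
                    (aux_summable_shift α hα N)
              _ ≤ (N:ℝ)^(1-α)/(α-1) := aux_tail α hα N hN1
      _ ≤ ε/2 + ε/2 := by rw [hNδ]; exact add_le_add le_rfl htail
      _ = ε := by ring

/-- Covering estimate for the Banach cube `BC((n^{-α}))`: for every `s > 1/(α-1)` and every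
small enough `ε > 0`, the cube can be covered by at most `exp (ε^{-s})` closed balls of
radius `ε`. -/
theorem banach_cube_covering (α s : ℝ) (hα : 1 < α) (hs : 1 / (α - 1) < s) :
    ∃ ε₀ : ℝ, 0 < ε₀ ∧ ∀ ε : ℝ, 0 < ε → ε < ε₀ →
      ∃ F : Finset (lp (fun _ : ℕ => ℝ) 1),
        (F.card : ℝ) ≤ Real.exp (ε ^ (-s)) ∧
        (BCube fun n : ℕ => ((n : ℝ) + 1) ^ (-α)) ⊆ ⋃ x ∈ F, Metric.closedBall x ε := by
  have hα1 : (0:ℝ) < α - 1 := by linarith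
  set t : ℝ := (1/(α-1) + s)/2 with ht_def
  have htβ : 1/(α-1) < t := by rw [ht_def]; linarith
  have hts : t < s := by rw [ht_def]; linarith
  have ht0 : 0 < t := lt_of_le_of_lt (by positivity) htβ
  have hu0 : 0 < t*(α-1) - 1 := by
    have h1 : 1/(α-1) * (α-1) = 1 := div_mul_cancel₀ 1 hα1.ne'
    nlinarith
  have hr0 : 0 < s - t := by linarith
  have E1 : ∀ᶠ ε : ℝ in 𝓝[>] 0, ε < 1 :=
    nhdsWithin_le_nhds (eventually_lt_nhds one_pos)
  have E2 : ∀ᶠ ε : ℝ in 𝓝[>] 0, 2/(α-1) ≤ ε ^ (-(t*(α-1)-1)) := by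
    have h1 : Tendsto (fun ε : ℝ => (ε⁻¹) ^ (t*(α-1)-1)) (𝓝[>] 0) atTop :=
      (tendsto_rpow_atTop hu0).comp tendsto_inv_nhdsGT_zero
    have h2 : Tendsto (fun ε : ℝ => ε ^ (-(t*(α-1)-1))) (𝓝[>] 0) atTop := by
      apply h1.congr'
      filter_upwards [self_mem_nhdsWithin] with ε (hε : 0 < ε)
      rw [Real.inv_rpow hε.le, ← Real.rpow_neg hε.le]
    exact h2.eventually_ge_atTop _
  have E3 : ∀ᶠ ε : ℝ in 𝓝[>] 0, 2*(Real.log 5 + (t+1) * Real.log ε⁻¹) * ε ^ (s-t) ≤ 1 := by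
    have hA : Tendsto (fun ε : ℝ => ε ^ (s-t)) (𝓝[>] 0) (𝓝 0) := by
      have h := (Real.continuousAt_rpow_const 0 (s-t) (Or.inr hr0.le)).tendsto
      rw [Real.zero_rpow hr0.ne'] at h
      exact h.mono_left nhdsWithin_le_nhds
    have hB : Tendsto (fun ε : ℝ => Real.log ε * ε ^ (s-t)) (𝓝[>] 0) (𝓝 0) :=
      tendsto_log_mul_rpow_nhdsGT_zero hr0
    have hC : Tendsto (fun ε : ℝ => 2*(Real.log 5 + (t+1) * Real.log ε⁻¹) * ε ^ (s-t))
        (𝓝[>] 0) (𝓝 0) := by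
      have h := (hA.const_mul (2*Real.log 5)).sub (hB.const_mul (2*(t+1)))
      simp only [mul_zero, sub_zero] at h
      refine h.congr fun ε => ?_
      rw [Real.log_inv]; ring
    exact hC.eventually (eventually_le_nhds one_pos)
  have Eall := E1.and (E2.and E3)
  rw [Filter.eventually_iff, mem_nhdsGT_iff_exists_Ioo_subset] at Eall
  obtain ⟨ε₀, hε₀, hsub⟩ := Eall
  refine ⟨ε₀, hε₀, fun ε hε hεlt => ?_⟩
  obtain ⟨hε1, hE2, hE3⟩ := hsub ⟨hε, hεlt⟩
  exact aux_main α s t hα ht0 ε hε hε1 hE2 hE3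
end

section
/- Let X be a compact metric space of Hausdorff dimension d and let 0 < d' < d. Then there exist a constant C > 0 and a sequence (q_i)_{i≥1} of points of X such that d(q_i, q_j) ≥ C·i^{−1/d'} for all integers 1 ≤ i < j. -/
/-!
If `d' < s < dimH X`, then `μH[s] X = ∞`. Balls of radii `C i^{-1/d'}` have `s`-dimensional
content at most `(2C)^s ∑ i^{-s/d'}`, which tends to `0` with `C` since `s/d' > 1`; so for
small `C` no finite family of such balls covers `X`. A point outside the balls around
`q_0, …, q_{j-1}` can therefore always be chosen as `q_j`.
-/

open scoped ENNReal NNReal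

open MeasureTheory Set Filter Topology Metric

theorem exists_seq_of_forall_fin_exists {α : Type*} {R : ℕ → α → α → Prop}
    (h : ∀ (n : ℕ) (p : Fin n → α), ∃ x, ∀ i : Fin n, R i (p i) x) :
    ∃ q : ℕ → α, ∀ i j, i < j → R i (q i) (q j) := by
  choose F hF using h
  let q : ℕ → α := Nat.strongRec fun n ih => F n fun i => ih i i.2
  have hq : ∀ n, q n = F n fun i => q i := Nat.strongRec_eq _
  exact ⟨q, fun i j hij => hq j ▸ hF j (fun i => q i) ⟨i, hij⟩⟩

theorem ediam_ball_le_ofReal_two_mul {X : Type*} [PseudoMetricSpace X] (x : X) (ρ : ℝ) :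
    ediam (ball x ρ) ≤ ENNReal.ofReal (2 * ρ) :=
  ediam_le_of_forall_dist_le fun _ hy _ hz =>
    (dist_triangle_right _ _ x).trans (by linarith [mem_ball.1 hy, mem_ball.1 hz])

theorem tsum_ediam_ball_rpow_le {X : Type*} [PseudoMetricSpace X] {s C : ℝ} (hs : 0 ≤ s)
    (hC : 0 ≤ C) {r : ℕ → ℝ} (hr₀ : ∀ i, 0 ≤ r i) (hr : Summable fun i => r i ^ s) {n : ℕ}
    (p : Fin n → X) :
    ∑' i : Fin n, ediam (ball (p i) (C * r i)) ^ s ≤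
      ENNReal.ofReal ((2 * C) ^ s * ∑' i, r i ^ s) := by
  have hterm : ∀ i : ℕ, ∀ x : X,
      ediam (ball x (C * r i)) ^ s ≤ ENNReal.ofReal ((2 * C) ^ s * r i ^ s) := fun i x => by
    calc ediam (ball x (C * r i)) ^ s ≤ ENNReal.ofReal (2 * C * r i) ^ s := by
          rw [mul_assoc]; exact ENNReal.rpow_le_rpow (ediam_ball_le_ofReal_two_mul _ _) hs
      _ = ENNReal.ofReal ((2 * C) ^ s * r i ^ s) := by
          rw [ENNReal.ofReal_rpow_of_nonneg (by positivity [hr₀ i]) hs,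
            Real.mul_rpow (by positivity) (hr₀ i)]
  calc ∑' i : Fin n, ediam (ball (p i) (C * r i)) ^ s
      ≤ ∑' i : Fin n, ENNReal.ofReal ((2 * C) ^ s * r i ^ s) :=
        ENNReal.tsum_le_tsum fun i => hterm i (p i)
    _ ≤ ∑' i : ℕ, ENNReal.ofReal ((2 * C) ^ s * r i ^ s) :=
        ENNReal.tsum_comp_le_tsum_of_injective Fin.val_injective _
    _ = ENNReal.ofReal ((2 * C) ^ s * ∑' i, r i ^ s) := by
        rw [← ENNReal.ofReal_tsum_of_nonneg (fun i => by positivity [hr₀ i]) (hr.mul_left _),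
          tsum_mul_left]

theorem hausdorffMeasure_eq_zero_of_forall_subset_iUnion_ball_mul {X : Type*} [MetricSpace X]
    [MeasurableSpace X] [BorelSpace X] {s : ℝ} (hs : 0 < s) {A : Set X} {r : ℕ → ℝ}
    (hr₀ : ∀ i, 0 ≤ r i) (hr₁ : ∀ i, r i ≤ 1) (hr : Summable fun i => r i ^ s)
    (hcov : ∀ C > 0, ∃ (n : ℕ) (p : Fin n → X), A ⊆ ⋃ i, ball (p i) (C * r i)) :
    μH[s] A = 0 := by
  set c : ℕ → ℝ := fun m => 1 / ((m : ℝ) + 1)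
  have hc₀ : ∀ m, 0 < c m := fun m => Nat.one_div_pos_of_nat
  have hc : Tendsto c atTop (𝓝 0) := tendsto_one_div_add_atTop_nhds_zero_nat
  choose n p hp using fun m => hcov (c m) (hc₀ m)
  have hdiam : Tendsto (fun m => ENNReal.ofReal (2 * c m)) atTop (𝓝 0) := by
    simpa using ENNReal.tendsto_ofReal (hc.const_mul 2)
  have hsum : Tendsto (fun m => ENNReal.ofReal ((2 * c m) ^ s * ∑' i, r i ^ s)) atTop (𝓝 0) := by
    have h := ((hc.const_mul 2).rpow_const (Or.inr hs.le)).mul_const (∑' i, r i ^ s)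
    simpa [Real.zero_rpow hs.ne'] using ENNReal.tendsto_ofReal h
  have hball : ∀ m i, ediam (ball (p m i) (c m * r i)) ≤ ENNReal.ofReal (2 * c m) := fun m i =>
    (ediam_ball_le_ofReal_two_mul _ _).trans <| ENNReal.ofReal_le_ofReal <| by
      nlinarith [hc₀ m, hr₁ i]
  refine le_zero_iff.1 <| (Measure.hausdorffMeasure_le_liminf_tsum s A _ hdiam
    (fun m i => ball (p m i) (c m * r i)) (.of_forall hball) (.of_forall hp)).trans ?_
  exact (liminf_le_liminf (.of_forall fun m =>
    tsum_ediam_ball_rpow_le hs.le (hc₀ m).le hr₀ hr (p m))).trans_eq hsum.liminf_eq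

theorem exists_pos_forall_exists_le_dist_of_hausdorffMeasure_ne_zero {X : Type*}
    [MetricSpace X] [MeasurableSpace X] [BorelSpace X] {s : ℝ} (hs : 0 < s) {r : ℕ → ℝ}
    (hr₀ : ∀ i, 0 ≤ r i) (hr₁ : ∀ i, r i ≤ 1) (hr : Summable fun i => r i ^ s)
    (hμ : μH[s] (univ : Set X) ≠ 0) :
    ∃ C > 0, ∀ (n : ℕ) (p : Fin n → X), ∃ x, ∀ i : Fin n, C * r i ≤ dist (p i) x := by
  by_contra! h
  refine hμ <| hausdorffMeasure_eq_zero_of_forall_subset_iUnion_ball_mul hs hr₀ hr₁ hr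
    fun C hC => ?_
  obtain ⟨n, p, hp⟩ := h C hC
  exact ⟨n, p, fun x _ => mem_iUnion.2 ((hp x).imp fun _ => mem_ball'.2)⟩

theorem summable_rpow_neg_inv_rpow {a s : ℝ} (ha : 0 < a) (has : a < s) :
    Summable fun i : ℕ => ((i : ℝ) ^ (-(1 / a))) ^ s := by
  have hlt : -(1 / a) * s < -1 := by
    rw [neg_mul, one_div_mul_eq_div, neg_lt_neg_iff]
    exact (one_lt_div ha).2 has
  exact (Real.summable_nat_rpow.2 hlt).congr fun i => Real.rpow_mul (Nat.cast_nonneg i) _ _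

theorem natCast_rpow_le_one_of_nonpos {a : ℝ} (ha : a ≤ 0) (i : ℕ) : (i : ℝ) ^ a ≤ 1 := by
  rcases i.eq_zero_or_pos with rfl | hi
  · simpa using Real.zero_rpow_le_one a
  · exact Real.rpow_le_one_of_one_le_of_nonpos (by exact_mod_cast hi) ha

theorem exists_separated_sequence_of_dimH_general
    {X : Type*} [MetricSpace X]
    (d : ℝ≥0∞) (hd : dimH (Set.univ : Set X) = d)
    (d' : ℝ) (hd'₀ : 0 < d') (hd' : ENNReal.ofReal d' < d) :
    ∃ C : ℝ, 0 < C ∧ ∃ q : ℕ → X, ∀ i j : ℕ, 1 ≤ i → i < j →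
      C * (i : ℝ) ^ (-(1 / d')) ≤ dist (q i) (q j) := by
  borelize X
  obtain ⟨s, hd's, hsd⟩ := ENNReal.lt_iff_exists_nnreal_btwn.1 hd'
  have hs : d' < s := (Real.toNNReal_lt_iff_lt_coe hd'₀.le).1 (ENNReal.coe_lt_coe.1 hd's)
  have hμ : μH[s] (univ : Set X) ≠ 0 := by
    rw [hausdorffMeasure_of_lt_dimH (hd ▸ hsd)]
    exact ENNReal.top_ne_zero
  obtain ⟨C, hC, hfar⟩ := exists_pos_forall_exists_le_dist_of_hausdorffMeasure_ne_zero
    (hd'₀.trans hs) (fun i => Real.rpow_nonneg (Nat.cast_nonneg i) _)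
    (natCast_rpow_le_one_of_nonpos (neg_nonpos.2 (one_div_pos.2 hd'₀).le))
    (summable_rpow_neg_inv_rpow hd'₀ hs) hμ
  obtain ⟨q, hq⟩ := exists_seq_of_forall_fin_exists
    (R := fun i x y => C * (i : ℝ) ^ (-(1 / d')) ≤ dist x y) hfar
  exact ⟨C, hC, q, fun i j _ hij => hq i j hij⟩

/-- Lemma 6.1: a compact metric space of Hausdorff dimension `d` contains, for every
`0 < d' < d`, a sequence of points `(q_i)_{i ≥ 1}` with `dist (q i) (q j) ≥ C i^{-1/d'}`
for all `1 ≤ i < j`. -/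
theorem exists_separated_sequence_of_dimH
    {X : Type*} [MetricSpace X] [CompactSpace X]
    (d : ℝ≥0∞) (hd : dimH (Set.univ : Set X) = d)
    (d' : ℝ) (hd'₀ : 0 < d') (hd' : ENNReal.ofReal d' < d) :
    ∃ C : ℝ, 0 < C ∧ ∃ q : ℕ → X, ∀ i j : ℕ, 1 ≤ i → i < j →
      C * (i : ℝ) ^ (-(1 / d')) ≤ dist (q i) (q j) :=
  exists_separated_sequence_of_dimH_general d hd d' hd'₀ hd'
end

section
/- There exists a compact metric space X, which is moreover ultrametric, such that the lower and upper Minkowski dimensions of X are both equal to 1, while every nonempty proper closed subset Y ⊊ X has lower Minkowski dimension equal to 0. -/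
/-!
The space is the set of ends of a rooted tree whose level `t` consists of the labels
`0, …, 2 ^ t - 1`: from level `t` to level `t + 1` every label survives with a single child
(itself), and the `2 ^ t` new labels are all children of the one label `schedule t`. An end is
the sequence of its labels, at distance `2 ^ (-k)` from another end first differing at level `k`.
Level `n` carries `2 ^ n` labels, so `N(X, ε) ≍ 1 / ε` and `X` has Minkowski dimension `1`.

A proper closed subset `Y` misses a cylinder, i.e. a label `j` at some level `m`. The schedule
splits `j` at every level of arbitrarily late blocks `[n₀, n₀ ^ 2)`; all labels created there
descend from `j`, so `Y` meets only `2 ^ n₀` labels at level `n₀ ^ 2`. Hence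
`N(Y, 2 ^ (-n₀ ^ 2)) ≤ 2 ^ n₀` and the lower dimension of `Y` is `0`.
-/

open scoped ENNReal NNReal

/-- `coverN S ε` : minimal number of closed balls of radius `ε` needed to cover `S`
(`∞` if no finite cover exists). -/
noncomputable def coverN {Z : Type*} [MetricSpace Z] (S : Set Z) (ε : ℝ) : ℝ≥0∞ :=
  ⨅ (F : Finset Z) (_ : S ⊆ ⋃ x ∈ F, Metric.closedBall x ε), (F.card : ℝ≥0∞)

/-- The upper Minkowski (box-counting) dimension of a set. -/
noncomputable def upperMinkDim {Z : Type*} [MetricSpace Z] (S : Set Z) : ℝ :=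
  Filter.limsup (fun ε : ℝ => Real.log (coverN S ε).toReal / Real.log (1 / ε))
    (nhdsWithin 0 (Set.Ioi 0))

/-- The lower Minkowski (box-counting) dimension of a set. -/
noncomputable def lowerMinkDim {Z : Type*} [MetricSpace Z] (S : Set Z) : ℝ :=
  Filter.liminf (fun ε : ℝ => Real.log (coverN S ε).toReal / Real.log (1 / ε))
    (nhdsWithin 0 (Set.Ioi 0))

open Filter Topology Set

section BoxCounting

variable {Z : Type*} [MetricSpace Z]

noncomputable def boxRatio (S : Set Z) (ε : ℝ) : ℝ :=
  Real.log (coverN S ε).toReal / Real.log (1 / ε)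

theorem coverN_le_card {S : Set Z} {ε : ℝ} {F : Finset Z}
    (h : S ⊆ ⋃ x ∈ F, Metric.closedBall x ε) : coverN S ε ≤ F.card :=
  iInf₂_le F h

theorem one_le_coverN {S : Set Z} (hS : S.Nonempty) (ε : ℝ) : 1 ≤ coverN S ε := by
  refine le_iInf₂ fun F hF => ?_
  obtain ⟨y, hy⟩ := hS
  obtain ⟨x, hxF, -⟩ := mem_iUnion₂.1 (hF hy)
  exact_mod_cast Finset.card_pos.2 ⟨x, hxF⟩

theorem card_le_coverN {α : Type*} {S : Set Z} {ε : ℝ} (c : Z → α) {V : Finset α}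
    (hV : ↑V ⊆ c '' S) (hc : ∀ y z, dist y z ≤ ε → c y = c z) :
    (V.card : ℝ≥0∞) ≤ coverN S ε := by
  classical
  refine le_iInf₂ fun F hF => ?_
  have hVF : V ⊆ F.image c := by
    intro v hv
    obtain ⟨y, hy, rfl⟩ := hV hv
    obtain ⟨x, hxF, hyx⟩ := mem_iUnion₂.1 (hF hy)
    exact Finset.mem_image.2 ⟨x, hxF, (hc y x (Metric.mem_closedBall.1 hyx)).symm⟩
  exact_mod_cast (Finset.card_le_card hVF).trans Finset.card_image_le

theorem tendsto_boxRatio_of_abs_log_sub_le {S : Set Z} {B : ℝ}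
    (h : ∀ᶠ ε in 𝓝[>] 0, |Real.log (coverN S ε).toReal - Real.log (1 / ε)| ≤ B) :
    Tendsto (boxRatio S) (𝓝[>] 0) (𝓝 1) := by
  have hL : Tendsto (fun ε : ℝ => Real.log (1 / ε)) (𝓝[>] 0) atTop := by
    simpa only [one_div, Function.comp_def] using
      Real.tendsto_log_atTop.comp tendsto_inv_nhdsGT_zero
  have hsmall : Tendsto (fun ε => boxRatio S ε - 1) (𝓝[>] 0) (𝓝 0) := by
    refine squeeze_zero_norm' ?_ ((tendsto_const_nhds (x := B)).div_atTop hL)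
    filter_upwards [h, hL.eventually_gt_atTop 0] with ε hε hpos
    rw [Real.norm_eq_abs, boxRatio, div_sub_one hpos.ne', abs_div, abs_of_pos hpos]
    exact div_le_div_of_nonneg_right hε hpos.le
  simpa using hsmall.add_const 1

theorem lowerMinkDim_eq_zero_of_frequently_boxRatio_le {S : Set Z} (hS : S.Nonempty)
    (h : ∀ δ > 0, ∃ᶠ ε in 𝓝[>] 0, boxRatio S ε ≤ δ) : lowerMinkDim S = 0 := by
  have hnonneg : ∀ᶠ ε in 𝓝[>] 0, 0 ≤ boxRatio S ε := by
    filter_upwards [Ioo_mem_nhdsGT one_pos] with ε hε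
    refine div_nonneg ?_ (Real.log_nonneg ((one_le_div hε.1).2 hε.2.le))
    rcases eq_or_ne (coverN S ε) ⊤ with htop | htop
    · simp [htop]
    · exact Real.log_nonneg (by simpa using ENNReal.toReal_mono htop (one_le_coverN hS ε))
  refine le_antisymm (le_of_forall_pos_le_add fun δ hδ => ?_)
    (le_liminf_of_le (IsCoboundedUnder.of_frequently_le (h 1 one_pos)) hnonneg)
  rw [zero_add]
  exact liminf_le_of_frequently_le (h δ hδ) (isBoundedUnder_of_eventually_ge hnonneg)

theorem boxRatio_half_pow_le {S : Set Z} {k m : ℕ} (hm : 0 < m)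
    (hN : coverN S ((1 / 2) ^ m) ≤ 2 ^ k) : boxRatio S ((1 / 2) ^ m) ≤ k / m := by
  have hlog2 := Real.log_pos one_lt_two
  have hnum : Real.log (coverN S ((1 / 2) ^ m)).toReal ≤ k * Real.log 2 := by
    rw [← Real.log_pow]
    rcases ENNReal.toReal_nonneg.eq_or_lt with hzero | hpos
    · rw [← hzero, Real.log_zero]
      exact Real.log_nonneg (one_le_pow₀ one_le_two)
    · refine Real.log_le_log hpos ?_
      simpa only [ENNReal.toReal_pow, ENNReal.toReal_ofNat] using ENNReal.toReal_mono (by simp) hN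
  have hden : Real.log (1 / (1 / 2) ^ m) = m * Real.log 2 := by
    rw [one_div_pow, one_div_one_div, Real.log_pow]
  rw [boxRatio, hden]
  calc _ ≤ k * Real.log 2 / (m * Real.log 2) := by gcongr
    _ = k / m := mul_div_mul_right _ _ hlog2.ne'

theorem lowerMinkDim_eq_zero_of_exists_coverN_le {S : Set Z} (hS : S.Nonempty)
    (h : ∀ K : ℕ, ∃ n ≥ K, coverN S ((1 / 2) ^ (n ^ 2)) ≤ 2 ^ n) :
    lowerMinkDim S = 0 := by
  refine lowerMinkDim_eq_zero_of_frequently_boxRatio_le hS fun δ hδ => ?_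
  have hpow : Tendsto (fun k : ℕ => (1 / 2 : ℝ) ^ k) atTop (𝓝[>] 0) :=
    tendsto_nhdsWithin_of_tendsto_nhds_of_eventually_within _
      (tendsto_pow_atTop_nhds_zero_of_lt_one (by norm_num) one_half_lt_one)
      (Eventually.of_forall fun k => by simp)
  obtain ⟨K, hK⟩ := exists_nat_one_div_lt hδ
  refine hpow.frequently (frequently_atTop.2 fun k => ?_)
  obtain ⟨n, hn, hN⟩ := h (max k (K + 1))
  have hKn : K + 1 ≤ n := le_of_max_le_right hn
  refine ⟨n ^ 2, (le_of_max_le_left hn).trans (Nat.le_self_pow two_ne_zero n),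
    (boxRatio_half_pow_le (pow_pos (K.succ_pos.trans_le hKn) 2) hN).trans ?_⟩
  calc (n : ℝ) / ((n ^ 2 : ℕ) : ℝ) = 1 / n := by push_cast; field_simp
    _ ≤ 1 / ((K : ℝ) + 1) := one_div_le_one_div_of_le (by positivity) (by exact_mod_cast hKn)
    _ ≤ δ := hK.le

end BoxCounting

theorem Nat.log_log_eq_of_pow_pow_le_of_lt {b i n : ℕ} (hb : 1 < b) (h₁ : b ^ b ^ i ≤ n)
    (h₂ : n < b ^ b ^ (i + 1)) : Nat.log b (Nat.log b n) = i :=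
  Nat.log_eq_of_pow_le_of_lt_pow (Nat.le_log_of_pow_le hb h₁)
    (Nat.log_lt_of_lt_pow ((pow_pos (zero_lt_one.trans hb) _).trans_le h₁).ne' h₂)

theorem exists_pow_succ_le_lt_pow {r ε : ℝ} (hr : r < 1) (h₀ : 0 < ε) (h₁ : ε < 1) :
    ∃ n : ℕ, r ^ (n + 1) ≤ ε ∧ ε < r ^ n := by
  classical
  have hex : ∃ k, r ^ k ≤ ε := (exists_pow_lt_of_lt_one h₀ hr).imp fun _ => le_of_lt
  obtain ⟨n, hn⟩ : ∃ n, Nat.find hex = n + 1 := Nat.exists_eq_succ_of_ne_zero fun h => by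
    have := Nat.find_spec hex
    rw [h, pow_zero] at this
    linarith
  exact ⟨n, hn ▸ Nat.find_spec hex, not_le.1 (Nat.find_min hex (by omega))⟩

namespace SplittingTree

/-- During the block of levels `[2 ^ 2 ^ i, 2 ^ 2 ^ (i + 1))` the label `(Nat.unpair i).1` is
split; the reduction mod `2 ^ n` merely makes the value a valid label at level `n`. -/
def schedule (n : ℕ) : ℕ := (Nat.unpair (Nat.log 2 (Nat.log 2 n))).1 % 2 ^ n

theorem schedule_lt (n : ℕ) : schedule n < 2 ^ n := Nat.mod_lt _ (by positivity)

theorem exists_schedule_block (j K : ℕ) :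
    ∃ n₀, K ≤ n₀ ∧ ∀ n, n₀ ≤ n → n < n₀ ^ 2 → schedule n = j := by
  set i := Nat.pair j K
  have hi : i < 2 ^ 2 ^ i :=
    Nat.lt_two_pow_self.trans (Nat.pow_lt_pow_right one_lt_two Nat.lt_two_pow_self)
  refine ⟨2 ^ 2 ^ i, (Nat.right_le_pair j K).trans hi.le, fun n h₁ h₂ => ?_⟩
  rw [← pow_mul, ← pow_succ] at h₂
  rw [schedule, Nat.log_log_eq_of_pow_pow_le_of_lt one_lt_two h₁ h₂, Nat.unpair_pair]
  exact Nat.mod_eq_of_lt ((((Nat.left_le_pair j K).trans_lt hi).trans_le h₁).trans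
    Nat.lt_two_pow_self)

def parent (t x : ℕ) : ℕ := if x < 2 ^ t then x else schedule t

theorem parent_lt (t x : ℕ) : parent t x < 2 ^ t := by
  unfold parent
  split_ifs with h
  exacts [h, schedule_lt t]

theorem parent_of_lt {t x : ℕ} (h : x < 2 ^ t) : parent t x = x := if_pos h

def IsBranch (a : ℕ → ℕ) : Prop := ∀ t, a t < 2 ^ t ∧ a t = parent t (a (t + 1))

namespace IsBranch

variable {a b : ℕ → ℕ}

theorem apply_eq_of_le (ha : IsBranch a) (hb : IsBranch b) {n t : ℕ} (h : a n = b n)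
    (htn : t ≤ n) : a t = b t := by
  induction n, htn using Nat.le_induction with
  | base => exact h
  | succ n _ ih => exact ih (by rw [(ha n).2, (hb n).2, h])

theorem apply_eq_of_lt_two_pow (ha : IsBranch a) {c n t : ℕ} (hc : c < 2 ^ t) (htn : t ≤ n)
    (h : a n = c) : a t = c := by
  induction n, htn using Nat.le_induction with
  | base => exact h
  | succ n htn ih =>
    exact ih (by rw [(ha n).2, h, parent_of_lt (hc.trans_le (Nat.pow_le_pow_right two_pos htn))])

/-- All labels born at the levels of `[n₀, n₁)` descend from `j`, so a branch avoiding `j` at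
level `m` carries at level `n₁` one of the labels present at level `n₀`. -/
theorem apply_lt_of_schedule_eq (ha : IsBranch a) {m j n₀ n₁ : ℕ} (hj : j < 2 ^ m)
    (hm : m ≤ n₀) (hsch : ∀ n, n₀ ≤ n → n < n₁ → schedule n = j) (hne : a m ≠ j) :
    a n₁ < 2 ^ n₀ := by
  by_contra! hbig
  set x := a n₁
  have hx : x ≠ 0 := ((Nat.two_pow_pos n₀).trans_le hbig).ne'
  set t := Nat.log 2 x
  have ht₀ : n₀ ≤ t := Nat.le_log_of_pow_le one_lt_two hbig
  have ht₁ : t < n₁ := Nat.log_lt_of_lt_pow hx (ha n₁).1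
  have hxt : a (t + 1) = x :=
    ha.apply_eq_of_lt_two_pow (Nat.lt_pow_succ_log_self one_lt_two x) ht₁ rfl
  have hat : a t = j := by
    rw [(ha t).2, hxt, parent, if_neg (Nat.pow_log_le_self 2 hx).not_gt, hsch t ht₀ ht₁]
  exact hne (ha.apply_eq_of_lt_two_pow hj (hm.trans ht₀) hat)

end IsBranch

/-- `descend x t d` is the ancestor at level `t` of the label `x` placed at level `t + d`. -/
def descend (x : ℕ) : ℕ → ℕ → ℕ
  | _, 0 => x
  | t, d + 1 => parent t (descend x (t + 1) d)

theorem isBranch_descend (x : ℕ) : IsBranch fun t => descend x t (x - t) := by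
  intro t
  dsimp only
  rcases lt_or_ge t x with h | h
  · rw [show x - t = x - (t + 1) + 1 by omega]
    exact ⟨parent_lt _ _, rfl⟩
  · have hx : x < 2 ^ t := x.lt_two_pow_self.trans_le (Nat.pow_le_pow_right two_pos h)
    rw [Nat.sub_eq_zero_of_le h, Nat.sub_eq_zero_of_le (h.trans t.le_succ)]
    exact ⟨hx, (parent_of_lt hx).symm⟩

def Branch : Type := {a : ℕ → ℕ // IsBranch a}

def ofLabel (x : ℕ) : Branch := ⟨_, isBranch_descend x⟩

theorem ofLabel_apply {x t : ℕ} (hx : x < 2 ^ t) : (ofLabel x).1 t = x :=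
  (isBranch_descend x).apply_eq_of_lt_two_pow hx (le_max_left t x)
    (by simp [Nat.sub_eq_zero_of_le (le_max_right t x), descend])

section Metric

attribute [local instance] PiNat.metricSpaceNatNat

noncomputable instance : MetricSpace Branch := Subtype.metricSpace

theorem dist_le_of_apply_eq {x y : Branch} {n : ℕ} (h : x.1 n = y.1 n) :
    dist x y ≤ (1 / 2) ^ (n + 1) :=
  PiNat.mem_cylinder_iff_dist_le.1 fun _ hi => x.2.apply_eq_of_le y.2 h (Nat.lt_succ_iff.1 hi)

theorem apply_eq_of_dist_lt {x y : Branch} {n : ℕ} (h : dist x y < (1 / 2) ^ n) :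
    x.1 n = y.1 n :=
  PiNat.apply_eq_of_dist_lt h le_rfl

theorem dist_le_max (x y z : Branch) : dist x z ≤ max (dist x y) (dist y z) :=
  PiNat.dist_triangle_nonarch x.1 y.1 z.1

theorem isClosed_setOf_isBranch : IsClosed {a : ℕ → ℕ | IsBranch a} := by
  simp only [IsBranch, ofPred_forall]
  exact isClosed_iInter fun t =>
    (isClosed_discrete {p : ℕ × ℕ | p.1 < 2 ^ t ∧ p.1 = parent t p.2}).preimage
      (f := fun a : ℕ → ℕ => (a t, a (t + 1)))
      ((continuous_apply t).prodMk (continuous_apply (t + 1)))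

instance : CompactSpace Branch :=
  isCompact_iff_compactSpace.1 <|
    (isCompact_univ_pi fun t => (finite_Iio (2 ^ t)).isCompact).of_isClosed_subset
      isClosed_setOf_isBranch fun _ ha t _ => (ha t).1

end Metric

theorem coverN_le_of_forall_apply_lt {S : Set Branch} {n M : ℕ} {ε : ℝ}
    (hS : ∀ y ∈ S, y.1 n < M) (hε : (1 / 2) ^ (n + 1) ≤ ε) : coverN S ε ≤ M := by
  classical
  calc coverN S ε ≤ ((Finset.range M).image ofLabel).card := by
        refine coverN_le_card fun y hy => mem_iUnion₂.2 ⟨ofLabel (y.1 n), ?_, ?_⟩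
        · exact Finset.mem_image_of_mem _ (Finset.mem_range.2 (hS y hy))
        · exact (dist_le_of_apply_eq (ofLabel_apply (y.2 n).1).symm).trans hε
    _ ≤ M := by exact_mod_cast Finset.card_image_le.trans (Finset.card_range M).le

theorem two_pow_le_coverN_univ {n : ℕ} {ε : ℝ} (hε : ε < (1 / 2) ^ n) :
    2 ^ n ≤ coverN (univ : Set Branch) ε := by
  simpa using card_le_coverN (S := univ) (fun y : Branch => y.1 n) (V := Finset.range (2 ^ n))
    (fun x hx => ⟨ofLabel x, mem_univ _, ofLabel_apply (Finset.mem_range.1 hx)⟩)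
    fun _ _ h => apply_eq_of_dist_lt (h.trans_lt hε)

theorem coverN_univ_eq {n : ℕ} {ε : ℝ} (h₁ : (1 / 2) ^ (n + 1) ≤ ε)
    (h₂ : ε < (1 / 2) ^ n) :
    coverN (univ : Set Branch) ε = 2 ^ n :=
  le_antisymm (by exact_mod_cast coverN_le_of_forall_apply_lt (fun y _ => (y.2 n).1) h₁)
    (two_pow_le_coverN_univ h₂)

theorem abs_log_coverN_univ_sub_le {ε : ℝ} (h₀ : 0 < ε) (h₁ : ε < 1) :
    |Real.log (coverN (univ : Set Branch) ε).toReal - Real.log (1 / ε)| ≤ Real.log 2 := by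
  obtain ⟨n, hn₁, hn₂⟩ := exists_pow_succ_le_lt_pow one_half_lt_one h₀ h₁
  rw [coverN_univ_eq hn₁ hn₂, ENNReal.toReal_pow, ENNReal.toReal_ofNat]
  rw [one_div_pow] at hn₁ hn₂
  have hlow : (2 : ℝ) ^ n < 1 / ε := (lt_one_div (by positivity) h₀).2 hn₂
  have hup : 1 / ε ≤ (2 : ℝ) ^ (n + 1) := (one_div_le h₀ (by positivity)).2 hn₁
  have hlog_low := Real.log_lt_log (by positivity) hlow
  have hlog_up := Real.log_le_log (by positivity) hup
  rw [pow_succ, Real.log_mul (by positivity) two_ne_zero] at hlog_up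
  rw [abs_le]
  constructor <;> linarith

theorem tendsto_boxRatio_univ : Tendsto (boxRatio (univ : Set Branch)) (𝓝[>] 0) (𝓝 1) :=
  tendsto_boxRatio_of_abs_log_sub_le <| by
    filter_upwards [Ioo_mem_nhdsGT one_pos] with ε hε using abs_log_coverN_univ_sub_le hε.1 hε.2

theorem exists_apply_ne_of_ne_univ {Y : Set Branch} (hY : IsClosed Y) (hne : Y ≠ univ) :
    ∃ m j, j < 2 ^ m ∧ ∀ y ∈ Y, y.1 m ≠ j := by
  obtain ⟨p, hp⟩ := (ne_univ_iff_exists_notMem Y).1 hne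
  obtain ⟨r, hr, hball⟩ := Metric.isOpen_iff.1 hY.isOpen_compl p hp
  obtain ⟨m, hm⟩ := exists_pow_lt_of_lt_one hr one_half_lt_one
  refine ⟨m, p.1 m, (p.2 m).1, fun y hy hyp => hball ?_ hy⟩
  calc dist y p ≤ (1 / 2) ^ (m + 1) := dist_le_of_apply_eq hyp
    _ < (1 / 2) ^ m := pow_lt_pow_right_of_lt_one₀ (by norm_num) one_half_lt_one m.lt_succ_self
    _ < r := hm

theorem exists_coverN_le_of_forall_apply_ne {Y : Set Branch} {m j : ℕ} (hj : j < 2 ^ m)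
    (hY : ∀ y ∈ Y, y.1 m ≠ j) (K : ℕ) :
    ∃ n ≥ K, coverN Y ((1 / 2) ^ (n ^ 2)) ≤ 2 ^ n := by
  obtain ⟨n, hn, hsch⟩ := exists_schedule_block j (max K m)
  refine ⟨n, le_of_max_le_left hn, ?_⟩
  exact_mod_cast coverN_le_of_forall_apply_lt
    (fun y hy => y.2.apply_lt_of_schedule_eq hj (le_of_max_le_right hn) hsch (hY y hy))
    (pow_le_pow_of_le_one (by norm_num) (by norm_num) (n ^ 2).le_succ)

theorem lowerMinkDim_eq_zero_of_ne_univ {Y : Set Branch} (hY : Y.Nonempty) (hcl : IsClosed Y)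
    (hne : Y ≠ univ) : lowerMinkDim Y = 0 := by
  obtain ⟨m, j, hj, hYj⟩ := exists_apply_ne_of_ne_univ hcl hne
  exact lowerMinkDim_eq_zero_of_exists_coverN_le hY (exists_coverN_le_of_forall_apply_ne hj hYj)

end SplittingTree

/-- Proposition 7.1: there is a compact ultrametric space of Minkowski dimension `1`
all of whose nonempty proper closed subsets have lower Minkowski dimension `0`. -/
theorem exists_space_with_small_proper_subsets :
    ∃ (X : Type) (_ : MetricSpace X), CompactSpace X ∧
      (∀ x y z : X, dist x z ≤ max (dist x y) (dist y z)) ∧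
      lowerMinkDim (Set.univ : Set X) = 1 ∧
      upperMinkDim (Set.univ : Set X) = 1 ∧
      ∀ Y : Set X, Y.Nonempty → IsClosed Y → Y ≠ Set.univ → lowerMinkDim Y = 0 :=
  ⟨SplittingTree.Branch, inferInstance, inferInstance, SplittingTree.dist_le_max,
    SplittingTree.tendsto_boxRatio_univ.liminf_eq, SplittingTree.tendsto_boxRatio_univ.limsup_eq,
    fun _ => SplittingTree.lowerMinkDim_eq_zero_of_ne_univ⟩
end
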